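/- Let 0 < r ≤ 1/4 and θ ∈ ℝ. Let X_1, …, X_n be i.i.d. uniform on Q_1 ∪ Q_2, let f0 = θ(1_{Q_1} − 1_{Q_2}), and let Y_i = f0(X_i) + w_i with w_1,…,w_n i.i.d. standard Gaussian, independent of the X_i. Form the neighborhood graph with weights W_{ij} = 1{|X_i − X_j| ≤ ε} for ε = r/2, with graph Laplacian L = D − W (D the diagonal degree matrix), and let f̂ be the Euclidean orthogonal projection of Y = (Y_1,…,Y_n) onto the span of (any measurable choice of) two orthonormal eigenvectors of L corresponding to its two smallest eigenvalues. Then there is a universal constant C > 0 such that E[ (1/n) ∑_{i=1}^n (f̂_i − f0(X_i))² ] ≤ C( (θ² + 1)·(1/r)·exp(−n r / 8) + 1/n ). -/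

import Mathlib

open MeasureTheory ProbabilityTheory Matrix Finset

/-- The left cluster `Q₁ = [0, 1/2 - r]`. -/
def Q1 (r : ℝ) : Set ℝ := Set.Icc 0 (1 / 2 - r)

/-- The right cluster `Q₂ = [1/2 + r, 1]`. -/
def Q2 (r : ℝ) : Set ℝ := Set.Icc (1 / 2 + r) 1

/-- The uniform distribution on `Q₁ ∪ Q₂`, with density `1/(1-2r)` there. -/
noncomputable def unifQ (r : ℝ) : Measure ℝ :=
  ENNReal.ofReal (1 / (1 - 2 * r)) • (volume.restrict (Q1 r ∪ Q2 r))

/-- The piecewise-constant cluster signal `f₀ = θ(1_{Q₁} - 1_{Q₂})`. -/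
noncomputable def clusterSignal (r θ : ℝ) (x : ℝ) : ℝ :=
  θ * ((Q1 r).indicator (fun _ => (1 : ℝ)) x - (Q2 r).indicator (fun _ => (1 : ℝ)) x)

open scoped Classical in
/-- The neighborhood-graph Laplacian `L = D - W`, where `W_{ij} = 1{|xᵢ - xⱼ| ≤ ε}` (boxcar
kernel) and `D` is the diagonal matrix of row sums of `W`. -/
noncomputable def laplacianMatrix (n : ℕ) (x : Fin n → ℝ) (ε : ℝ) :
    Matrix (Fin n) (Fin n) ℝ :=
  Matrix.of fun i j =>
    (if i = j then ∑ l, (if |x i - x l| ≤ ε then (1 : ℝ) else 0) else 0)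
      - (if |x i - x j| ≤ ε then (1 : ℝ) else 0)

open scoped Classical ENNReal

namespace PCRAux

variable {n : ℕ}

def dot (u v : Fin n → ℝ) : ℝ := ∑ i, u i * v i

lemma dot_comm (u v : Fin n → ℝ) : dot u v = dot v u := by
  unfold dot; exact Finset.sum_congr rfl fun i _ => mul_comm _ _

noncomputable def eW (x : Fin n → ℝ) (ε : ℝ) (i j : Fin n) : ℝ :=
  if |x i - x j| ≤ ε then 1 else 0

lemma eW_symm (x : Fin n → ℝ) (ε : ℝ) (i j : Fin n) : eW x ε i j = eW x ε j i := by
  unfold eW; rw [abs_sub_comm]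

lemma eW_nonneg (x : Fin n → ℝ) (ε : ℝ) (i j : Fin n) : 0 ≤ eW x ε i j := by
  unfold eW; split <;> norm_num

lemma lap_mulVec (x : Fin n → ℝ) (ε : ℝ) (u : Fin n → ℝ) (i : Fin n) :
    (laplacianMatrix n x ε).mulVec u i = ∑ j, eW x ε i j * (u i - u j) := by
  have hterm : ∀ j, (laplacianMatrix n x ε) i j * u j
      = (if i = j then (∑ l, eW x ε i l) * u j else 0) - eW x ε i j * u j := by
    intro j; unfold laplacianMatrix eW; simp only [Matrix.of_apply]; split <;> ring
  unfold Matrix.mulVec dotProduct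
  rw [Finset.sum_congr rfl fun j _ => hterm j, Finset.sum_sub_distrib, Finset.sum_ite_eq]
  simp only [Finset.mem_univ, if_true, Finset.sum_mul]
  rw [← Finset.sum_sub_distrib]
  exact Finset.sum_congr rfl fun j _ => by ring

lemma dot_lap_eq (x : Fin n → ℝ) (ε : ℝ) (u : Fin n → ℝ) :
    dot u ((laplacianMatrix n x ε).mulVec u)
      = (∑ i, ∑ j, eW x ε i j * (u i - u j)^2) / 2 := by
  have hA : dot u ((laplacianMatrix n x ε).mulVec u)
      = ∑ i, ∑ j, eW x ε i j * (u i * (u i - u j)) := by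
    unfold dot
    simp only [lap_mulVec, Finset.mul_sum]
    exact Finset.sum_congr rfl fun i _ => Finset.sum_congr rfl fun j _ => by ring
  have hswap : ∑ i, ∑ j, eW x ε i j * (u j * (u j - u i))
      = ∑ i, ∑ j, eW x ε i j * (u i * (u i - u j)) := by
    rw [Finset.sum_comm]
    exact Finset.sum_congr rfl fun i _ => Finset.sum_congr rfl fun j _ => by
      rw [eW_symm]
  rw [hA, eq_div_iff (by norm_num : (2:ℝ) ≠ 0), mul_two]
  nth_rewrite 2 [← hswap]
  rw [← Finset.sum_add_distrib]
  refine Finset.sum_congr rfl fun i _ => ?_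
  rw [← Finset.sum_add_distrib]
  exact Finset.sum_congr rfl fun j _ => by ring

lemma dot_lap_nonneg (x : Fin n → ℝ) (ε : ℝ) (u : Fin n → ℝ) :
    0 ≤ dot u ((laplacianMatrix n x ε).mulVec u) := by
  rw [dot_lap_eq]
  apply div_nonneg _ (by norm_num)
  exact Finset.sum_nonneg fun i _ => Finset.sum_nonneg fun j _ =>
    mul_nonneg (eW_nonneg x ε i j) (sq_nonneg _)

lemma dot_lap_eq_zero (x : Fin n → ℝ) (ε : ℝ) (u : Fin n → ℝ)
    (h : dot u ((laplacianMatrix n x ε).mulVec u) = 0)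
    {i j : Fin n} (hij : |x i - x j| ≤ ε) : u i = u j := by
  rw [dot_lap_eq, div_eq_zero_iff] at h
  have h0 : ∑ i, ∑ j, eW x ε i j * (u i - u j)^2 = 0 := by
    rcases h with h | h
    · exact h
    · norm_num at h
  have hterm : ∀ i ∈ Finset.univ, ∑ j, eW x ε i j * (u i - u j)^2 = 0 :=
    (Finset.sum_eq_zero_iff_of_nonneg (fun i _ => Finset.sum_nonneg fun j _ =>
        mul_nonneg (eW_nonneg x ε i j) (sq_nonneg _))).mp h0
  have hterm2 : ∀ j' ∈ Finset.univ, eW x ε i j' * (u i - u j')^2 = 0 :=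
    (Finset.sum_eq_zero_iff_of_nonneg
      (fun j _ => mul_nonneg (eW_nonneg x ε i j) (sq_nonneg _))).mp
      (hterm i (Finset.mem_univ i))
  have h2 := hterm2 j (Finset.mem_univ j)
  unfold eW at h2
  rw [if_pos hij, one_mul, pow_eq_zero_iff (by norm_num)] at h2
  linarith [h2]

lemma dot_lap_expand (x : Fin n → ℝ) (ε : ℝ) (a b : Fin n → ℝ) :
    dot a ((laplacianMatrix n x ε).mulVec b)
      = (∑ i, ∑ j, eW x ε i j * (a i * b i)) - ∑ i, ∑ j, eW x ε i j * (a i * b j) := by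
  unfold dot
  simp only [lap_mulVec, Finset.mul_sum]
  rw [← Finset.sum_sub_distrib]
  refine Finset.sum_congr rfl fun i _ => ?_
  rw [← Finset.sum_sub_distrib]
  exact Finset.sum_congr rfl fun j _ => by ring

lemma dot_lap_comm (x : Fin n → ℝ) (ε : ℝ) (u v : Fin n → ℝ) :
    dot v ((laplacianMatrix n x ε).mulVec u) = dot u ((laplacianMatrix n x ε).mulVec v) := by
  rw [dot_lap_expand, dot_lap_expand]
  congr 1
  · exact Finset.sum_congr rfl fun i _ => Finset.sum_congr rfl fun j _ => by ring
  · rw [Finset.sum_comm]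
    exact Finset.sum_congr rfl fun i _ => Finset.sum_congr rfl fun j _ => by
      rw [eW_symm]; ring

lemma onb_complete (v : Fin n → Fin n → ℝ)
    (honb : ∀ k l, dot (v k) (v l) = if k = l then (1:ℝ) else 0) (i j : Fin n) :
    ∑ k, v k i * v k j = if i = j then (1:ℝ) else 0 := by
  let M : Matrix (Fin n) (Fin n) ℝ := Matrix.of fun k i => v k i
  have hM : M * Mᵀ = 1 := by
    ext k l
    have := honb k l
    unfold dot at this
    simpa [M, Matrix.mul_apply, Matrix.one_apply] using this
  have hM' : Mᵀ * M = 1 := mul_eq_one_comm.mp hM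
  have h := congrFun (congrFun hM' i) j
  simpa [M, Matrix.mul_apply, Matrix.one_apply] using h

lemma onb_expand (v : Fin n → Fin n → ℝ)
    (honb : ∀ k l, dot (v k) (v l) = if k = l then (1:ℝ) else 0) (u : Fin n → ℝ) (i : Fin n) :
    ∑ k, dot u (v k) * v k i = u i := by
  unfold dot
  calc ∑ k, (∑ j, u j * v k j) * v k i = ∑ k, ∑ j, u j * (v k j * v k i) := by
        refine Finset.sum_congr rfl fun k _ => ?_
        rw [Finset.sum_mul]
        exact Finset.sum_congr rfl fun j _ => by ring
    _ = ∑ j, ∑ k, u j * (v k j * v k i) := Finset.sum_comm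
    _ = ∑ j, u j * ∑ k, v k j * v k i := by
        refine Finset.sum_congr rfl fun j _ => ?_
        rw [Finset.mul_sum]
    _ = u i := by
        rw [Finset.sum_congr rfl (fun j _ => by rw [onb_complete v honb j i])]
        simp

lemma col_relations {c0 d0 c1 d1 N1 N2 : ℝ} (hN1 : 0 < N1) (hN2 : 0 < N2)
    (h00 : c0^2*N1 + d0^2*N2 = 1) (h11 : c1^2*N1 + d1^2*N2 = 1)
    (h01 : c0*c1*N1 + d0*d1*N2 = 0) :
    (c0^2 + c1^2) * N1 = 1 ∧ (d0^2 + d1^2) * N2 = 1 ∧ c0*d0 + c1*d1 = 0 := by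
  have s1 : Real.sqrt N1 * Real.sqrt N1 = N1 := Real.mul_self_sqrt hN1.le
  have s2 : Real.sqrt N2 * Real.sqrt N2 = N2 := Real.mul_self_sqrt hN2.le
  have s1p : 0 < Real.sqrt N1 := Real.sqrt_pos.mpr hN1
  have s2p : 0 < Real.sqrt N2 := Real.sqrt_pos.mpr hN2
  set a := Real.sqrt N1 with ha
  set b := Real.sqrt N2 with hb
  have hM : (!![c0 * a, d0 * b; c1 * a, d1 * b] : Matrix (Fin 2) (Fin 2) ℝ)
      * !![c0 * a, c1 * a; d0 * b, d1 * b] = 1 := by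
    rw [Matrix.mul_fin_two, Matrix.one_fin_two]
    ext i j
    fin_cases i <;> fin_cases j <;> simp
    · linear_combination h00 + c0^2*s1 + d0^2*s2
    · linear_combination h01 + c0*c1*s1 + d0*d1*s2
    · linear_combination h01 + c0*c1*s1 + d0*d1*s2
    · linear_combination h11 + c1^2*s1 + d1^2*s2
  have hM2 : (!![c0 * a, c1 * a; d0 * b, d1 * b] : Matrix (Fin 2) (Fin 2) ℝ)
      * !![c0 * a, d0 * b; c1 * a, d1 * b] = 1 := mul_eq_one_comm.mp hM
  rw [Matrix.mul_fin_two, Matrix.one_fin_two] at hM2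
  have e00 := congrFun (congrFun hM2 0) 0
  have e01 := congrFun (congrFun hM2 0) 1
  have e11 := congrFun (congrFun hM2 1) 1
  simp at e00 e01 e11
  refine ⟨by linear_combination e00 - (c0^2 + c1^2)*s1, by linear_combination e11 - (d0^2 + d1^2)*s2, ?_⟩
  have h' : (c0*d0 + c1*d1) * (a * b) = 0 := by linear_combination e01
  rcases mul_eq_zero.mp h' with h'' | h''
  · exact h''
  · nlinarith [mul_pos s1p s2p]

lemma three_ortho_absurd {c0 d0 c1 d1 c2 d2 N1 N2 : ℝ} (hN1 : 0 < N1) (hN2 : 0 < N2)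
    (h00 : c0^2*N1 + d0^2*N2 = 1) (h11 : c1^2*N1 + d1^2*N2 = 1)
    (h22 : c2^2*N1 + d2^2*N2 = 1)
    (h01 : c0*c1*N1 + d0*d1*N2 = 0) (h02 : c0*c2*N1 + d0*d2*N2 = 0)
    (h12 : c1*c2*N1 + d1*d2*N2 = 0) : False := by
  obtain ⟨hc, hd, hcd⟩ := col_relations hN1 hN2 h00 h11 h01
  have hc2 : c2 = 0 := by linear_combination c0*h02 + c1*h12 - c2*hc - d2*N2*hcd
  have hd2 : d2 = 0 := by linear_combination d0*h02 + d1*h12 - d2*hd - c2*N1*hcd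
  rw [hc2, hd2] at h22
  norm_num at h22




noncomputable def mR (r : ℝ) : ℕ := ⌈2 / r⌉₊

noncomputable def covH (r : ℝ) : ℝ := (1/2 - r) / mR r

noncomputable def covB (r : ℝ) (a : Bool) : ℝ := if a then 1/2 + r else 0

noncomputable def covI (r : ℝ) (a : Bool) (t : ℕ) : Set ℝ :=
  Set.Icc (covB r a + t * covH r) (covB r a + (t+1) * covH r)

variable {r : ℝ}

lemma mR_pos (hr : 0 < r) : 0 < mR r := by
  have : (0:ℝ) < 2 / r := by positivity
  exact Nat.ceil_pos.mpr this

lemma mR_ge (hr : 0 < r) : 2 / r ≤ (mR r : ℝ) := Nat.le_ceil _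

lemma mR_le (hr : 0 < r) (hr4 : r ≤ 1/4) : (mR r : ℝ) ≤ 3 / r := by
  have h := Nat.ceil_lt_add_one (show (0:ℝ) ≤ 2 / r by positivity)
  have : 2 / r + 1 ≤ 3 / r := by
    rw [div_add' _ _ _ (ne_of_gt hr), div_le_div_iff₀ hr hr]
    nlinarith
  unfold mR; linarith

lemma Lpos (hr4 : r ≤ 1/4) : (0:ℝ) < 1/2 - r := by linarith

lemma covH_pos (hr : 0 < r) (hr4 : r ≤ 1/4) : 0 < covH r := by
  unfold covH
  have := mR_pos hr
  have hm : (0:ℝ) < mR r := by exact_mod_cast this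
  exact div_pos (Lpos hr4) hm

lemma covH_le (hr : 0 < r) (hr4 : r ≤ 1/4) : covH r ≤ r / 4 := by
  unfold covH
  have hm2 : 2 / r ≤ (mR r : ℝ) := mR_ge hr
  have hmpos : (0:ℝ) < mR r := by exact_mod_cast mR_pos hr
  rw [div_le_iff₀ hmpos]
  have key : r/4 * (2/r) = 1/2 := by field_simp; ring
  calc (1:ℝ)/2 - r ≤ r/4 * (2/r) := by rw [key]; linarith
    _ ≤ r/4 * mR r := mul_le_mul_of_nonneg_left hm2 (by linarith)

lemma covI_subset (hr : 0 < r) (hr4 : r ≤ 1/4) {a : Bool} {t : ℕ} (ht : t < mR r) :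
    covI r a t ⊆ (if a then Q2 r else Q1 r) := by
  intro z hz
  obtain ⟨hz1, hz2⟩ := hz
  have hh := covH_pos hr hr4
  have htm : ((t:ℝ)+1) ≤ (mR r : ℝ) := by exact_mod_cast Nat.succ_le_of_lt ht
  have hup : covB r a + ((t:ℝ)+1) * covH r ≤ covB r a + (1/2 - r) := by
    have : ((t:ℝ)+1) * covH r ≤ (mR r : ℝ) * covH r :=
      mul_le_mul_of_nonneg_right htm hh.le
    have hmh : (mR r : ℝ) * covH r = 1/2 - r := by
      unfold covH
      have : (mR r : ℝ) ≠ 0 := by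
        have := mR_pos hr; positivity
      field_simp
    linarith
  have hlow : covB r a ≤ covB r a + (t:ℝ) * covH r := by
    have : 0 ≤ (t:ℝ) * covH r := by positivity
    linarith
  cases a with
  | false =>
    simp only [if_neg Bool.false_ne_true]
    unfold covB at hz1 hz2 hup hlow
    simp only [Bool.false_eq_true, if_false] at hz1 hz2 hup hlow
    exact ⟨by linarith, by linarith⟩
  | true =>
    simp only [if_pos rfl]
    unfold covB at hz1 hz2 hup hlow
    simp only [if_true] at hz1 hz2 hup hlow
    constructor
    · linarith
    · have : covB r true + (1/2 - r) = 1 := by unfold covB; norm_num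
      unfold covB at this; simp at this
      linarith

lemma covI_subset_union (hr : 0 < r) (hr4 : r ≤ 1/4) {a : Bool} {t : ℕ} (ht : t < mR r) :
    covI r a t ⊆ Q1 r ∪ Q2 r := by
  intro z hz
  have h := covI_subset hr hr4 ht hz
  cases a with
  | false => left; simpa using h
  | true => right; simpa using h

lemma exists_subinterval {L : ℝ} (hL : 0 < L) {m : ℕ} (hm : 0 < m) {s : ℝ}
    (hs0 : 0 ≤ s) (hsL : s ≤ L) :
    ∃ t < m, (t:ℝ) * (L/m) ≤ s ∧ s ≤ ((t:ℝ)+1) * (L/m) := by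
  have hmR : (0:ℝ) < m := by exact_mod_cast hm
  have hh : 0 < L / m := div_pos hL hmR
  by_cases hcase : ⌊s / (L/m)⌋₊ < m
  · refine ⟨⌊s / (L/m)⌋₊, hcase, ?_, ?_⟩
    · rw [← le_div_iff₀ hh]
      exact Nat.floor_le (by positivity)
    · rw [← div_le_iff₀ hh]
      exact (Nat.lt_floor_add_one _).le
  · push_neg at hcase
    refine ⟨m - 1, by omega, ?_, ?_⟩
    · have h1 : ((m:ℝ) - 1) ≤ ⌊s / (L/m)⌋₊ := by
        have : (m:ℝ) ≤ (⌊s / (L/m)⌋₊ : ℝ) := by exact_mod_cast hcase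
        linarith
      have h2 : (⌊s / (L/m)⌋₊ : ℝ) ≤ s / (L/m) := Nat.floor_le (by positivity)
      have h3 : ((m-1 : ℕ) : ℝ) = (m:ℝ) - 1 := by
        have : (1:ℕ) ≤ m := hm
        push_cast [this]
        ring
      rw [h3, ← le_div_iff₀ hh]
      linarith
    · have h3 : ((m-1 : ℕ) : ℝ) = (m:ℝ) - 1 := by
        have : (1:ℕ) ≤ m := hm
        push_cast [this]
        ring
      rw [h3]
      have : ((m:ℝ) - 1 + 1) * (L/m) = L := by
        field_simp
        ring
      rw [this]
      exact hsL

lemma cover_exists (hr : 0 < r) (hr4 : r ≤ 1/4) {z : ℝ} {a : Bool}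
    (hz : z ∈ (if a then Q2 r else Q1 r)) :
    ∃ t < mR r, z ∈ covI r a t := by
  have hL := Lpos hr4
  have hm := mR_pos hr
  have hs0 : 0 ≤ z - covB r a := by
    cases a with
    | false => simp only [Bool.false_eq_true, if_false] at hz; unfold covB; simp [hz.1]
    | true => simp only [if_true] at hz; unfold covB; simp; linarith [hz.1]
  have hsL : z - covB r a ≤ 1/2 - r := by
    cases a with
    | false => simp only [Bool.false_eq_true, if_false] at hz; unfold covB; simp; linarith [hz.2]
    | true => simp only [if_true] at hz; unfold covB; simp; linarith [hz.2]
  obtain ⟨t, htm, h1, h2⟩ := exists_subinterval hL hm hs0 hsL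
  refine ⟨t, htm, ?_, ?_⟩
  · unfold covH; linarith [h1]
  · unfold covH; linarith [h2]

lemma measurable_covI (r : ℝ) (a : Bool) (t : ℕ) : MeasurableSet (covI r a t) :=
  measurableSet_Icc

lemma Q_union_meas (r : ℝ) : MeasurableSet (Q1 r ∪ Q2 r) :=
  measurableSet_Icc.union measurableSet_Icc

lemma unifQ_covI (hr : 0 < r) (hr4 : r ≤ 1/4) {a : Bool} {t : ℕ} (ht : t < mR r) :
    unifQ r (covI r a t) = ENNReal.ofReal (1 / (2 * (mR r : ℝ))) := by
  unfold unifQ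
  rw [Measure.smul_apply, Measure.restrict_apply (measurable_covI r a t)]
  rw [Set.inter_eq_left.mpr (covI_subset_union hr hr4 ht)]
  unfold covI
  rw [Real.volume_Icc]
  have harg : covB r a + ((t:ℝ)+1) * covH r - (covB r a + (t:ℝ) * covH r) = covH r := by ring
  rw [harg]
  have h12 : (0:ℝ) < 1 - 2*r := by linarith
  rw [smul_eq_mul, ← ENNReal.ofReal_mul (le_of_lt (by positivity))]
  congr 1
  have h2L : 1 - 2*r = 2 * (1/2 - r) := by ring
  have hmne : (mR r : ℝ) ≠ 0 := by
    have := mR_pos hr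
    positivity
  have hLne : (1/2 - r) ≠ 0 := ne_of_gt (Lpos hr4)
  unfold covH
  rw [h2L]
  field_simp

lemma unifQ_covI_ge (hr : 0 < r) (hr4 : r ≤ 1/4) : r / 6 ≤ 1 / (2 * (mR r : ℝ)) := by
  have h1 : (mR r : ℝ) ≤ 3 / r := mR_le hr hr4
  have h2 : (0:ℝ) < mR r := by exact_mod_cast mR_pos hr
  rw [div_le_div_iff₀ (by norm_num) (by positivity)]
  calc r * (2 * mR r) ≤ r * (2 * (3/r)) := by
        apply mul_le_mul_of_nonneg_left _ hr.le
        linarith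
    _ = 1 * 6 := by field_simp; norm_num

lemma unifQ_covI_le_one (hr : 0 < r) (hr4 : r ≤ 1/4) : 1 / (2 * (mR r : ℝ)) ≤ 1 := by
  have h2 : (1:ℝ) ≤ mR r := by exact_mod_cast mR_pos hr
  rw [div_le_one (by linarith)]
  linarith






lemma two_mul_le_exp {t : ℝ} (ht : 0 ≤ t) : 2 * t ≤ Real.exp t := by
  have h := Real.add_one_le_exp (t / 2)
  have h2 : Real.exp t = Real.exp (t / 2) * Real.exp (t / 2) := by
    rw [← Real.exp_add]; ring_nf
  have h3 : (t/2 + 1) * (t/2 + 1) ≤ Real.exp (t/2) * Real.exp (t/2) :=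
    mul_le_mul (by linarith) (by linarith) (by linarith) (Real.exp_pos _).le
  nlinarith [sq_nonneg (1 - t/2)]

lemma sqrt_four : Real.sqrt 4 = 2 := by
  rw [show (4:ℝ) = 2^2 by norm_num]
  exact Real.sqrt_sq (by norm_num)

lemma pdf_le (x : ℝ) : gaussianPDFReal 0 1 x ≤ (1/2) * Real.exp (-(1/2) * x^2) := by
  rw [gaussianPDFReal]
  have h2 : (2:ℝ) ≤ Real.sqrt (2 * Real.pi * (1:NNReal)) := by
    have h := Real.sqrt_le_sqrt (show (4:ℝ) ≤ 2 * Real.pi * (1:NNReal) by push_cast; nlinarith [Real.pi_gt_three])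
    rwa [sqrt_four] at h
  have hinv : (Real.sqrt (2 * Real.pi * (1:NNReal)))⁻¹ ≤ 1/2 := by
    rw [inv_le_comm₀ (by linarith) (by norm_num)]
    simpa using h2
  have hexp : (-(x - 0)^2 / (2 * ((1:NNReal):ℝ))) = (-(1/2) * x^2) := by
    push_cast; ring
  rw [hexp]
  exact mul_le_mul_of_nonneg_right hinv (Real.exp_pos _).le

lemma pdf_nonneg (x : ℝ) : 0 ≤ gaussianPDFReal 0 1 x := gaussianPDFReal_nonneg 0 1 x

lemma pdf_meas : Measurable (gaussianPDFReal 0 1) := measurable_gaussianPDFReal 0 1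

lemma gauss_density_eq :
    gaussianReal 0 1 = volume.withDensity fun x => ((gaussianPDFReal 0 1 x).toNNReal : ℝ≥0∞) := by
  rw [gaussianReal_of_var_ne_zero 0 one_ne_zero]
  rfl

lemma gauss_integral_eq (g : ℝ → ℝ) :
    ∫ x, g x ∂(gaussianReal 0 1) = ∫ x, gaussianPDFReal 0 1 x * g x := by
  rw [gauss_density_eq, integral_withDensity_eq_integral_smul
    (pdf_meas.real_toNNReal : Measurable fun x => (gaussianPDFReal 0 1 x).toNNReal)]
  congr 1; ext x
  simp [NNReal.smul_def, Real.coe_toNNReal _ (pdf_nonneg x)]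

lemma gauss_integrable_iff (g : ℝ → ℝ) :
    Integrable g (gaussianReal 0 1) ↔ Integrable (fun x => gaussianPDFReal 0 1 x * g x) volume := by
  rw [gauss_density_eq, integrable_withDensity_iff_integrable_smul
    (pdf_meas.real_toNNReal : Measurable fun x => (gaussianPDFReal 0 1 x).toNNReal)]
  constructor <;> intro h <;> refine h.congr (Filter.Eventually.of_forall fun x => ?_) <;>
    simp [NNReal.smul_def, Real.coe_toNNReal _ (pdf_nonneg x)]

lemma gauss_integrable_id : Integrable (fun x : ℝ => x) (gaussianReal 0 1) := by
  rw [gauss_integrable_iff]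
  have hmaj : Integrable (fun x : ℝ => (1/2) * |x * Real.exp (-(1/2) * x^2)|) volume :=
    ((integrable_mul_exp_neg_mul_sq (by norm_num : (0:ℝ) < 1/2)).abs).const_mul _
  refine hmaj.mono' ((pdf_meas.mul measurable_id).aestronglyMeasurable)
    (Filter.Eventually.of_forall fun x => ?_)
  have h1 := pdf_le x
  have h0 := pdf_nonneg x
  have he := Real.exp_pos (-(1/2) * x^2)
  rw [Real.norm_eq_abs, abs_mul, abs_mul, abs_of_nonneg h0, abs_of_nonneg he.le]
  nlinarith [abs_nonneg x]

lemma gauss_integral_id : ∫ x, x ∂(gaussianReal 0 1) = 0 := by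
  rw [gauss_integral_eq]
  set f : ℝ → ℝ := fun x => gaussianPDFReal 0 1 x * x with hf
  have hodd : ∀ x, f (-x) = - f x := by
    intro x
    simp only [hf, gaussianPDFReal]
    rw [show (-(-x - 0) ^ 2) = (-(x - 0)^2) by ring]
    ring
  have h1 : ∫ x, f (-x) = ∫ x, f x := integral_neg_eq_self f volume
  have h2 : ∫ x, f (-x) = - ∫ x, f x := by
    rw [show (fun x => f (-x)) = fun x => -(f x) from funext hodd]
    exact integral_neg f
  linarith [h1, h2]

lemma sq_pdf_le (x : ℝ) : gaussianPDFReal 0 1 x * x^2 ≤ Real.exp (-(1/4) * x^2) := by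
  have h1 := pdf_le x
  have h2 : x^2 ≤ 2 * Real.exp ((1/4) * x^2) := by
    have h := two_mul_le_exp (t := (1/4) * x^2) (by positivity)
    linarith
  have h3 : Real.exp (-(1/2) * x^2) * Real.exp ((1/4) * x^2) = Real.exp (-(1/4) * x^2) := by
    rw [← Real.exp_add]; ring_nf
  have h0 := pdf_nonneg x
  have he1 := Real.exp_pos (-(1/2) * x^2)
  have he2 := Real.exp_pos ((1/4) * x^2)
  calc gaussianPDFReal 0 1 x * x^2
      ≤ ((1/2) * Real.exp (-(1/2) * x^2)) * (2 * Real.exp ((1/4) * x^2)) := by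
        apply mul_le_mul h1 h2 (sq_nonneg x) (by positivity)
    _ = Real.exp (-(1/4) * x^2) := by rw [← h3]; ring

lemma gauss_integrable_sq : Integrable (fun x : ℝ => x^2) (gaussianReal 0 1) := by
  rw [gauss_integrable_iff]
  refine (integrable_exp_neg_mul_sq (by norm_num : (0:ℝ) < 1/4)).mono'
    ((pdf_meas.mul (measurable_id.pow_const 2)).aestronglyMeasurable)
    (Filter.Eventually.of_forall fun x => ?_)
  rw [Real.norm_eq_abs, abs_mul, abs_of_nonneg (pdf_nonneg x), abs_of_nonneg (sq_nonneg x)]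
  exact sq_pdf_le x

lemma gauss_integral_sq_le : ∫ x, x^2 ∂(gaussianReal 0 1) ≤ 4 := by
  rw [gauss_integral_eq]
  have hint : Integrable (fun x : ℝ => gaussianPDFReal 0 1 x * x^2) volume := by
    have := gauss_integrable_sq
    rwa [gauss_integrable_iff] at this
  calc ∫ x, gaussianPDFReal 0 1 x * x^2
      ≤ ∫ x, Real.exp (-(1/4) * x^2) :=
        integral_mono hint (integrable_exp_neg_mul_sq (by norm_num)) sq_pdf_le
    _ = Real.sqrt (Real.pi / (1/4)) := integral_gaussian (1/4)
    _ ≤ Real.sqrt 16 := Real.sqrt_le_sqrt (by nlinarith [Real.pi_le_four])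
    _ = 4 := by
        rw [show (16:ℝ) = 4^2 by norm_num]
        exact Real.sqrt_sq (by norm_num)

lemma gauss_integral_sq_nonneg : 0 ≤ ∫ x, x^2 ∂(gaussianReal 0 1) :=
  integral_nonneg fun x => sq_nonneg x



-- ===== good event deterministic analysis =====

variable {r θ : ℝ} {n : ℕ}

noncomputable def ind1 (r : ℝ) (x : Fin n → ℝ) : Fin n → ℝ :=
  fun i => if x i ∈ Q1 r then 1 else 0
noncomputable def ind2 (r : ℝ) (x : Fin n → ℝ) : Fin n → ℝ :=
  fun i => if x i ∈ Q2 r then 1 else 0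
noncomputable def Nc1 (r : ℝ) (x : Fin n → ℝ) : ℝ := ∑ i, ind1 r x i
noncomputable def Nc2 (r : ℝ) (x : Fin n → ℝ) : ℝ := ∑ i, ind2 r x i
noncomputable def sc1 (r : ℝ) (x wv : Fin n → ℝ) : ℝ := ∑ i, ind1 r x i * wv i
noncomputable def sc2 (r : ℝ) (x wv : Fin n → ℝ) : ℝ := ∑ i, ind2 r x i * wv i

lemma Q_disjoint (hr : 0 < r) {z : ℝ} (h1 : z ∈ Q1 r) (h2 : z ∈ Q2 r) : False := by
  obtain ⟨_, h1b⟩ := h1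
  obtain ⟨h2a, _⟩ := h2
  linarith

lemma clusterSignal_eq (hr : 0 < r) (x : Fin n → ℝ) (i : Fin n) :
    clusterSignal r θ (x i) = θ * ind1 r x i - θ * ind2 r x i := by
  unfold clusterSignal ind1 ind2
  rw [Set.indicator_apply, Set.indicator_apply]
  ring

set_option maxHeartbeats 1000000 in
lemma good_event_eq (hr : 0 < r) (hr4 : r ≤ 1/4)
    (x : Fin n → ℝ)
    (hxA : ∀ i, x i ∈ Q1 r ∪ Q2 r)
    (hcov : ∀ (a : Bool), ∀ t, t < mR r → ∃ i, x i ∈ covI r a t)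
    (lam : Fin n → ℝ) (v : Fin n → Fin n → ℝ)
    (hmono : Monotone lam)
    (heig : ∀ k, (laplacianMatrix n x (r/2)).mulVec (v k) = lam k • v k)
    (honb : ∀ k l, dot (v k) (v l) = if k = l then (1:ℝ) else 0)
    (wv : Fin n → ℝ) :
    ∑ i, ((∑ k ∈ univ.filter fun k : Fin n => (k : ℕ) < 2,
            (∑ j, (clusterSignal r θ (x j) + wv j) * v k j) • v k) i
          - clusterSignal r θ (x i)) ^ 2
      = (sc1 r x wv)^2 / Nc1 r x + (sc2 r x wv)^2 / Nc2 r x := by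
  set L := laplacianMatrix n x (r/2) with hL
  set e1 := ind1 r x with he1
  set e2 := ind2 r x with he2
  -- membership dichotomy
  have hdi : ∀ i, (x i ∈ Q1 r ∧ x i ∉ Q2 r) ∨ (x i ∈ Q2 r ∧ x i ∉ Q1 r) := by
    intro i
    rcases hxA i with h | h
    · exact Or.inl ⟨h, fun h2 => Q_disjoint hr h h2⟩
    · exact Or.inr ⟨h, fun h1 => Q_disjoint hr h1 h⟩
  -- edges only within clusters
  have hedge : ∀ i j, |x i - x j| ≤ r/2 → ((x i ∈ Q1 r ↔ x j ∈ Q1 r) ∧ (x i ∈ Q2 r ↔ x j ∈ Q2 r)) := by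
    intro i j hij
    rw [abs_le] at hij
    have key : ¬ (x i ∈ Q1 r ∧ x j ∈ Q2 r) := by
      rintro ⟨⟨_, h1⟩, ⟨h2, _⟩⟩
      have : x j - x i ≥ 2 * r := by linarith
      linarith [hij.2, hij.1]
    have key' : ¬ (x j ∈ Q1 r ∧ x i ∈ Q2 r) := by
      rintro ⟨⟨_, h1⟩, ⟨h2, _⟩⟩
      have : x i - x j ≥ 2 * r := by linarith
      linarith [hij.2, hij.1]
    rcases hdi i with ⟨hi1, hi2⟩ | ⟨hi2, hi1⟩ <;> rcases hdi j with ⟨hj1, hj2⟩ | ⟨hj2, hj1⟩ <;>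
      tauto
  -- choose representatives in each cover interval
  choose p hp using hcov
  have hm0 : 0 < mR r := mR_pos hr
  -- chain: edge-constant functions are constant on clusters
  have hchain : ∀ u : Fin n → ℝ, (∀ i j, |x i - x j| ≤ r/2 → u i = u j) →
      ∀ (a : Bool), ∀ i, x i ∈ (if a then Q2 r else Q1 r) → u i = u (p a 0 hm0) := by
    intro u hu a
    have hadj : ∀ t (ht : t + 1 < mR r), u (p a (t+1) ht) = u (p a t (Nat.lt_of_succ_lt ht)) := by
      intro t ht
      apply hu
      obtain ⟨hA1, hA2⟩ := hp a (t+1) ht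
      obtain ⟨hB1, hB2⟩ := hp a t (Nat.lt_of_succ_lt ht)
      have hh := covH_pos hr hr4
      have hh4 := covH_le hr hr4
      push_cast at hA1 hA2 hB1 hB2
      rw [abs_le]
      constructor <;> nlinarith
    have hline : ∀ t (ht : t < mR r), u (p a t ht) = u (p a 0 hm0) := by
      intro t
      induction t with
      | zero => intro ht; rfl
      | succ t ih => intro ht; rw [hadj t ht]; exact ih (Nat.lt_of_succ_lt ht)
    intro i hi
    obtain ⟨t, htm, hit⟩ := cover_exists hr hr4 hi
    have hclose : |x i - x (p a t htm)| ≤ r/2 := by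
      obtain ⟨hA1, hA2⟩ := hit
      obtain ⟨hB1, hB2⟩ := hp a t htm
      have hh := covH_pos hr hr4
      have hh4 := covH_le hr hr4
      rw [abs_le]
      constructor <;> nlinarith
    rw [hu i (p a t htm) hclose]
    exact hline t htm
  -- nonempty clusters
  set i1 := p false 0 hm0 with hi1def
  set i2 := p true 0 hm0 with hi2def
  have hi1 : x i1 ∈ Q1 r := by
    have h := covI_subset hr hr4 hm0 (hp false 0 hm0)
    simpa using h
  have hi2 : x i2 ∈ Q2 r := by
    have h := covI_subset hr hr4 hm0 (hp true 0 hm0)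
    simpa using h
  have hind1_nonneg : ∀ i : Fin n, (0:ℝ) ≤ ind1 r x i := by
    intro i; simp only [ind1]; split <;> norm_num
  have hind2_nonneg : ∀ i : Fin n, (0:ℝ) ≤ ind2 r x i := by
    intro i; simp only [ind2]; split <;> norm_num
  have hNc1 : 0 < Nc1 r x := by
    have h1 := Finset.single_le_sum (f := fun i => ind1 r x i)
      (fun i _ => hind1_nonneg i) (Finset.mem_univ i1)
    have h2 : ind1 r x i1 = 1 := by simp only [ind1]; rw [if_pos hi1]
    rw [h2] at h1
    unfold Nc1
    linarith
  have hNc2 : 0 < Nc2 r x := by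
    have h1 := Finset.single_le_sum (f := fun i => ind2 r x i)
      (fun i _ => hind2_nonneg i) (Finset.mem_univ i2)
    have h2 : ind2 r x i2 = 1 := by simp only [ind2]; rw [if_pos hi2]
    rw [h2] at h1
    unfold Nc2
    linarith
  -- cluster-constant functions are in the kernel
  have hL0 : ∀ u : Fin n → ℝ, (∀ i j, |x i - x j| ≤ r/2 → u i = u j) → L.mulVec u = 0 := by
    intro u hu
    funext i
    rw [hL, lap_mulVec]
    apply Finset.sum_eq_zero
    intro j _
    unfold eW
    split
    · rename_i hij
      rw [hu i j hij]
      ring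
    · ring
  have hedge1 : ∀ i j, |x i - x j| ≤ r/2 → e1 i = e1 j := by
    intro i j hij
    obtain ⟨h1, _⟩ := hedge i j hij
    rw [he1]; unfold ind1
    by_cases h : x i ∈ Q1 r
    · rw [if_pos h, if_pos (h1.mp h)]
    · rw [if_neg h, if_neg (fun hc => h (h1.mpr hc))]
  have hedge2 : ∀ i j, |x i - x j| ≤ r/2 → e2 i = e2 j := by
    intro i j hij
    obtain ⟨_, h2⟩ := hedge i j hij
    rw [he2]; unfold ind2
    by_cases h : x i ∈ Q2 r
    · rw [if_pos h, if_pos (h2.mp h)]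
    · rw [if_neg h, if_neg (fun hc => h (h2.mpr hc))]
  have hLe1 : L.mulVec e1 = 0 := hL0 e1 hedge1
  have hLe2 : L.mulVec e2 = 0 := hL0 e2 hedge2
  -- eigenvalues
  have hlam_eq : ∀ k, lam k = dot (v k) (L.mulVec (v k)) := by
    intro k
    rw [heig k]
    have : dot (v k) (lam k • v k) = lam k * dot (v k) (v k) := by
      unfold dot
      rw [Finset.mul_sum]
      exact Finset.sum_congr rfl fun j _ => by
        simp [Pi.smul_apply, smul_eq_mul]; ring
    rw [this, honb k k, if_pos rfl, mul_one]
  have hlam_nonneg : ∀ k, 0 ≤ lam k := by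
    intro k
    rw [hlam_eq k, hL]
    exact dot_lap_nonneg x (r/2) (v k)
  -- coefficients of kernel vectors against eigenvectors with nonzero eigenvalues vanish
  have hcoeff : ∀ (u : Fin n → ℝ) (k : Fin n), L.mulVec u = 0 → lam k ≠ 0 → dot u (v k) = 0 := by
    intro u k hu hlamk
    have h1 : dot (v k) (L.mulVec u) = dot u (L.mulVec (v k)) := by
      rw [hL]; exact dot_lap_comm x (r/2) u (v k)
    rw [hu] at h1
    have h2 : dot (v k) (0 : Fin n → ℝ) = 0 := by unfold dot; simp
    rw [h2] at h1
    rw [heig k] at h1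
    have h3 : dot u (lam k • v k) = lam k * dot u (v k) := by
      unfold dot
      rw [Finset.mul_sum]
      exact Finset.sum_congr rfl fun j _ => by
        simp [Pi.smul_apply, smul_eq_mul]; ring
    rw [h3] at h1
    rcases mul_eq_zero.mp h1.symm with h | h
    · exact absurd h hlamk
    · exact h
  -- kernel structure
  have hker : ∀ u : Fin n → ℝ, L.mulVec u = 0 →
      ∀ i, u i = u i1 * e1 i + u i2 * e2 i := by
    intro u hu i
    have hquad : dot u (L.mulVec u) = 0 := by
      rw [hu]; unfold dot; simp
    have hec : ∀ i j, |x i - x j| ≤ r/2 → u i = u j := by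
      intro i j hij
      rw [hL] at hquad
      exact dot_lap_eq_zero x (r/2) u hquad hij
    rcases hdi i with ⟨h1, h2⟩ | ⟨h2, h1⟩
    · have := hchain u hec false i (by simpa using h1)
      rw [he1, he2]; unfold ind1 ind2
      rw [if_pos h1, if_neg h2]
      rw [← hi1def] at this
      rw [this]; ring
    · have := hchain u hec true i (by simpa using h2)
      rw [he1, he2]; unfold ind1 ind2
      rw [if_pos h2, if_neg h1]
      rw [← hi2def] at this
      rw [this]; ring
  -- dot products of cluster-combination vectors
  have hdotcd : ∀ (A B A' B' : ℝ),
      dot (fun i => A * e1 i + B * e2 i) (fun i => A' * e1 i + B' * e2 i)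
        = A*A'*Nc1 r x + B*B'*Nc2 r x := by
    intro A B A' B'
    unfold dot Nc1 Nc2
    rw [Finset.mul_sum, Finset.mul_sum, ← Finset.sum_add_distrib]
    refine Finset.sum_congr rfl fun i _ => ?_
    rcases hdi i with ⟨h1, h2⟩ | ⟨h2, h1⟩
    · rw [he1, he2]; simp only [ind1, ind2]; rw [if_pos h1, if_neg h2]; ring
    · rw [he1, he2]; simp only [ind1, ind2]; rw [if_neg h1, if_pos h2]; ring
  -- n ≥ 2
  have hne12 : i1 ≠ i2 := by
    intro h
    rw [h] at hi1
    exact Q_disjoint hr hi1 hi2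
  have hn2 : 1 < n := by
    by_contra hle
    push_neg at hle
    apply hne12
    have h1 := i1.isLt
    have h2 := i2.isLt
    apply Fin.ext
    omega
  set k0 : Fin n := ⟨0, by omega⟩ with hk0
  set k1 : Fin n := ⟨1, by omega⟩ with hk1
  have hk01 : k0 ≠ k1 := by
    intro h
    rw [Fin.ext_iff] at h
    simp [hk0, hk1] at h
  -- two smallest eigenvalues vanish
  have hlam1 : lam k1 = 0 := by
    by_contra hne
    have hpos : ∀ k, k ≠ k0 → lam k ≠ 0 := by
      intro k hk
      have h1k : (1:ℕ) ≤ (k:ℕ) := by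
        rcases Nat.eq_zero_or_pos (k:ℕ) with h | h
        · exact absurd (Fin.ext h) hk
        · exact h
      have : lam k1 ≤ lam k := hmono (by rw [Fin.le_def]; simpa [hk1] using h1k)
      have h0 : 0 < lam k1 := lt_of_le_of_ne (hlam_nonneg k1) (Ne.symm hne)
      linarith
    have hexp1 : ∀ i, e1 i = dot e1 (v k0) * v k0 i := by
      intro i
      have := onb_expand v honb e1 i
      rw [← this]
      rw [Finset.sum_eq_single k0]
      · intro k _ hk
        rw [hcoeff e1 k hLe1 (hpos k hk)]
        ring
      · intro h
        exact absurd (Finset.mem_univ k0) h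
    have hexp2 : ∀ i, e2 i = dot e2 (v k0) * v k0 i := by
      intro i
      have := onb_expand v honb e2 i
      rw [← this]
      rw [Finset.sum_eq_single k0]
      · intro k _ hk
        rw [hcoeff e2 k hLe2 (hpos k hk)]
        ring
      · intro h
        exact absurd (Finset.mem_univ k0) h
    set A := dot e1 (v k0)
    set B := dot e2 (v k0)
    have hN1 : Nc1 r x = A^2 := by
      have h1 : Nc1 r x = dot e1 e1 := by
        unfold dot Nc1
        refine Finset.sum_congr rfl fun i _ => ?_
        rw [he1]; unfold ind1; split <;> norm_num
      rw [h1]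
      unfold dot
      rw [Finset.sum_congr rfl (fun i _ => by rw [hexp1 i])]
      have : ∑ i, (A * v k0 i) * (A * v k0 i) = A^2 * ∑ i, v k0 i * v k0 i := by
        rw [Finset.mul_sum]
        exact Finset.sum_congr rfl fun i _ => by ring
      rw [this]
      have h2 := honb k0 k0
      unfold dot at h2
      rw [h2, if_pos rfl, mul_one]
    have hN2 : Nc2 r x = B^2 := by
      have h1 : Nc2 r x = dot e2 e2 := by
        unfold dot Nc2
        refine Finset.sum_congr rfl fun i _ => ?_
        rw [he2]; unfold ind2; split <;> norm_num
      rw [h1]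
      unfold dot
      rw [Finset.sum_congr rfl (fun i _ => by rw [hexp2 i])]
      have : ∑ i, (B * v k0 i) * (B * v k0 i) = B^2 * ∑ i, v k0 i * v k0 i := by
        rw [Finset.mul_sum]
        exact Finset.sum_congr rfl fun i _ => by ring
      rw [this]
      have h2 := honb k0 k0
      unfold dot at h2
      rw [h2, if_pos rfl, mul_one]
    have hAB : A * B = 0 := by
      have h0 : dot e1 e2 = 0 := by
        unfold dot
        apply Finset.sum_eq_zero
        intro i _
        rcases hdi i with ⟨h1, h2⟩ | ⟨h2, h1⟩
        · rw [he1, he2]; simp only [ind1, ind2]; rw [if_pos h1, if_neg h2]; ring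
        · rw [he1, he2]; simp only [ind1, ind2]; rw [if_neg h1, if_pos h2]; ring
      have h1 : dot e1 e2 = A * B := by
        unfold dot
        rw [Finset.sum_congr rfl (fun i _ => by rw [hexp1 i, hexp2 i])]
        have : ∑ i, (A * v k0 i) * (B * v k0 i) = A*B * ∑ i, v k0 i * v k0 i := by
          rw [Finset.mul_sum]
          exact Finset.sum_congr rfl fun i _ => by ring
        rw [this]
        have h2 := honb k0 k0
        unfold dot at h2
        rw [h2, if_pos rfl, mul_one]
      rw [← h1, h0]
    nlinarith [hNc1, hNc2, hN1, hN2, hAB]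
  have hlam0 : lam k0 = 0 := by
    have h1 : lam k0 ≤ lam k1 := hmono (by rw [Fin.le_def]; simp [hk0, hk1])
    have h2 := hlam_nonneg k0
    linarith [hlam1]
  -- eigenvalues with index ≥ 2 are nonzero
  have hlam_pos : ∀ k : Fin n, 2 ≤ (k:ℕ) → lam k ≠ 0 := by
    intro k hk2 hlamk
    have hnull : ∀ k' : Fin n, lam k' = 0 → L.mulVec (v k') = 0 := by
      intro k' h
      rw [heig k', h, zero_smul]
    have h0 := hnull k0 hlam0
    have h1 := hnull k1 hlam1
    have h2 := hnull k hlamk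
    have hv0 := hker (v k0) h0
    have hv1 := hker (v k1) h1
    have hv2 := hker (v k) h2
    have hdotall : ∀ (ka kb : Fin n) (ca da cb db : ℝ),
        (∀ i, v ka i = ca * e1 i + da * e2 i) →
        (∀ i, v kb i = cb * e1 i + db * e2 i) →
        dot (v ka) (v kb) = ca*cb*Nc1 r x + da*db*Nc2 r x := by
      intro ka kb ca da cb db ha hb
      rw [funext ha, funext hb, hdotcd]
    have hk0k1 : k0 ≠ k1 := hk01
    have hk0k : k0 ≠ k := by
      intro h; rw [Fin.ext_iff] at h; simp [hk0] at h; omega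
    have hk1k : k1 ≠ k := by
      intro h; rw [Fin.ext_iff] at h; simp [hk1] at h; omega
    have d00 := hdotall k0 k0 _ _ _ _ hv0 hv0
    have d11 := hdotall k1 k1 _ _ _ _ hv1 hv1
    have d22 := hdotall k k _ _ _ _ hv2 hv2
    have d01 := hdotall k0 k1 _ _ _ _ hv0 hv1
    have d02 := hdotall k0 k _ _ _ _ hv0 hv2
    have d12 := hdotall k1 k _ _ _ _ hv1 hv2
    rw [honb k0 k0, if_pos rfl] at d00
    rw [honb k1 k1, if_pos rfl] at d11
    rw [honb k k, if_pos rfl] at d22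
    rw [honb k0 k1, if_neg hk0k1] at d01
    rw [honb k0 k, if_neg hk0k] at d02
    rw [honb k1 k, if_neg hk1k] at d12
    exact three_ortho_absurd hNc1 hNc2 (by linarith [d00]) (by linarith [d11])
      (by linarith [d22]) d01.symm d02.symm d12.symm
  -- the filter set
  have hfilter : (univ.filter fun k : Fin n => (k : ℕ) < 2) = {k0, k1} := by
    ext k
    simp only [Finset.mem_filter, Finset.mem_univ, true_and, Finset.mem_insert,
      Finset.mem_singleton]
    constructor
    · intro h
      have h2 : (k:ℕ) = 0 ∨ (k:ℕ) = 1 := by omega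
      rcases h2 with h2 | h2
      · left; exact Fin.ext (by simpa [hk0] using h2)
      · right; exact Fin.ext (by simpa [hk1] using h2)
    · rintro (h | h) <;> rw [h] <;> simp [hk0, hk1]
  -- projection identity for kernel vectors
  have hproj : ∀ u : Fin n → ℝ, L.mulVec u = 0 →
      ∀ i, (∑ k ∈ univ.filter (fun k : Fin n => (k : ℕ) < 2), dot u (v k) * v k i) = u i := by
    intro u hu i
    have hzero : ∀ k ∈ univ, k ∉ univ.filter (fun k : Fin n => (k : ℕ) < 2) →
        dot u (v k) * v k i = 0 := by
      intro k _ hk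
      rw [Finset.mem_filter] at hk
      push_neg at hk
      have h2 : 2 ≤ (k:ℕ) := hk (Finset.mem_univ k)
      rw [hcoeff u k hu (hlam_pos k h2)]
      ring
    rw [Finset.sum_subset (Finset.subset_univ _) hzero]
    exact onb_expand v honb u i
  -- the signal is in the kernel
  set f0v : Fin n → ℝ := fun i => clusterSignal r θ (x i) with hf0v
  have hLf0 : L.mulVec f0v = 0 := by
    apply hL0
    intro i j hij
    rw [hf0v]
    simp only
    rw [clusterSignal_eq hr, clusterSignal_eq hr]
    rw [← he1, ← he2, hedge1 i j hij, hedge2 i j hij]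
  -- decompose the projection
  have hsum_apply : ∀ i, (∑ k ∈ univ.filter fun k : Fin n => (k : ℕ) < 2,
      (∑ j, (clusterSignal r θ (x j) + wv j) * v k j) • v k) i
      = ∑ k ∈ univ.filter (fun k : Fin n => (k : ℕ) < 2),
          (dot f0v (v k) + dot wv (v k)) * v k i := by
    intro i
    rw [Finset.sum_apply]
    refine Finset.sum_congr rfl fun k _ => ?_
    rw [Pi.smul_apply, smul_eq_mul]
    congr 1
    unfold dot
    rw [← Finset.sum_add_distrib]
    refine Finset.sum_congr rfl fun j _ => ?_
    rw [hf0v]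
    ring
  have hresid : ∀ i, (∑ k ∈ univ.filter fun k : Fin n => (k : ℕ) < 2,
      (∑ j, (clusterSignal r θ (x j) + wv j) * v k j) • v k) i - clusterSignal r θ (x i)
      = dot wv (v k0) * v k0 i + dot wv (v k1) * v k1 i := by
    intro i
    rw [hsum_apply i]
    have hsplit : ∑ k ∈ univ.filter (fun k : Fin n => (k : ℕ) < 2),
        (dot f0v (v k) + dot wv (v k)) * v k i
        = (∑ k ∈ univ.filter (fun k : Fin n => (k : ℕ) < 2), dot f0v (v k) * v k i)
          + ∑ k ∈ univ.filter (fun k : Fin n => (k : ℕ) < 2), dot wv (v k) * v k i := by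
      rw [← Finset.sum_add_distrib]
      exact Finset.sum_congr rfl fun k _ => by ring
    rw [hsplit, hproj f0v hLf0 i]
    have : f0v i = clusterSignal r θ (x i) := rfl
    rw [← this]
    rw [hfilter, Finset.sum_insert (by simp [hk01]), Finset.sum_singleton]
    ring
  -- sum of squares
  have hsq : ∑ i, (dot wv (v k0) * v k0 i + dot wv (v k1) * v k1 i)^2
      = (dot wv (v k0))^2 + (dot wv (v k1))^2 := by
    set A0 := dot wv (v k0)
    set A1 := dot wv (v k1)
    have hexpand : ∀ i, (A0 * v k0 i + A1 * v k1 i)^2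
        = A0^2 * (v k0 i * v k0 i) + 2*A0*A1 * (v k0 i * v k1 i) + A1^2 * (v k1 i * v k1 i) := by
      intro i; ring
    rw [Finset.sum_congr rfl (fun i _ => hexpand i)]
    rw [Finset.sum_add_distrib, Finset.sum_add_distrib]
    rw [← Finset.mul_sum, ← Finset.mul_sum, ← Finset.mul_sum]
    have h00 := honb k0 k0
    have h01 := honb k0 k1
    have h11 := honb k1 k1
    unfold dot at h00 h01 h11
    rw [h00, h01, h11, if_pos rfl, if_pos rfl, if_neg hk01]
    ring
  -- kernel coefficients of v k0, v k1
  have hv0 := hker (v k0) (by rw [heig k0, hlam0, zero_smul])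
  have hv1 := hker (v k1) (by rw [heig k1, hlam1, zero_smul])
  set c0 := v k0 i1
  set d0 := v k0 i2
  set c1 := v k1 i1
  set d1 := v k1 i2
  -- dot of wv with eigenvectors
  have hA0 : dot wv (v k0) = c0 * sc1 r x wv + d0 * sc2 r x wv := by
    unfold dot sc1 sc2
    rw [Finset.mul_sum, Finset.mul_sum, ← Finset.sum_add_distrib]
    refine Finset.sum_congr rfl fun i _ => ?_
    rw [hv0 i, ← he1, ← he2]
    ring
  have hA1 : dot wv (v k1) = c1 * sc1 r x wv + d1 * sc2 r x wv := by
    unfold dot sc1 sc2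
    rw [Finset.mul_sum, Finset.mul_sum, ← Finset.sum_add_distrib]
    refine Finset.sum_congr rfl fun i _ => ?_
    rw [hv1 i, ← he1, ← he2]
    ring
  -- orthonormality relations
  have hdot00 : c0^2 * Nc1 r x + d0^2 * Nc2 r x = 1 := by
    have h := honb k0 k0
    rw [if_pos rfl] at h
    rw [funext hv0, hdotcd] at h
    linarith [h]
  have hdot11 : c1^2 * Nc1 r x + d1^2 * Nc2 r x = 1 := by
    have h := honb k1 k1
    rw [if_pos rfl] at h
    rw [funext hv1, hdotcd] at h
    linarith [h]
  have hdot01 : c0*c1 * Nc1 r x + d0*d1 * Nc2 r x = 0 := by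
    have h := honb k0 k1
    rw [if_neg hk01] at h
    rw [funext hv0, funext hv1, hdotcd] at h
    linarith [h]
  obtain ⟨hcol1, hcol2, hcol3⟩ := col_relations hNc1 hNc2 hdot00 hdot11 hdot01
  -- final computation
  rw [Finset.sum_congr rfl (fun i _ => by rw [hresid i])]
  rw [hsq, hA0, hA1]
  have hN1ne : Nc1 r x ≠ 0 := ne_of_gt hNc1
  have hN2ne : Nc2 r x ≠ 0 := ne_of_gt hNc2
  rw [div_add_div _ _ hN1ne hN2ne, eq_div_iff (mul_ne_zero hN1ne hN2ne)]
  linear_combination (sc1 r x wv)^2 * Nc2 r x * hcol1 + (sc2 r x wv)^2 * Nc1 r x * hcol2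
    + 2*(sc1 r x wv)*(sc2 r x wv)*(Nc1 r x)*(Nc2 r x)*hcol3

-- ===== crude bounds and good-set infrastructure =====

lemma proj_sq (v : Fin n → Fin n → ℝ)
    (honb : ∀ k l, dot (v k) (v l) = if k = l then (1:ℝ) else 0)
    (c : Fin n → ℝ) (S : Finset (Fin n)) :
    ∑ i, (∑ k ∈ S, c k * v k i)^2 = ∑ k ∈ S, (c k)^2 := by
  have h1 : ∀ i : Fin n, (∑ k ∈ S, c k * v k i)^2
      = ∑ k ∈ S, ∑ l ∈ S, (c k * c l) * (v k i * v l i) := by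
    intro i
    rw [sq, Finset.sum_mul_sum]
    exact Finset.sum_congr rfl fun k _ => Finset.sum_congr rfl fun l _ => by ring
  rw [Finset.sum_congr rfl fun i _ => h1 i]
  calc ∑ i, ∑ k ∈ S, ∑ l ∈ S, (c k * c l) * (v k i * v l i)
      = ∑ k ∈ S, ∑ i, ∑ l ∈ S, (c k * c l) * (v k i * v l i) := Finset.sum_comm
    _ = ∑ k ∈ S, ∑ l ∈ S, ∑ i, (c k * c l) * (v k i * v l i) :=
        Finset.sum_congr rfl fun k _ => Finset.sum_comm
    _ = ∑ k ∈ S, ∑ l ∈ S, (c k * c l) * dot (v k) (v l) := by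
        refine Finset.sum_congr rfl fun k _ => Finset.sum_congr rfl fun l _ => ?_
        unfold dot
        rw [Finset.mul_sum]
    _ = ∑ k ∈ S, (c k)^2 := by
        refine Finset.sum_congr rfl fun k hk => ?_
        rw [Finset.sum_eq_single k]
        · rw [honb k k, if_pos rfl]; ring
        · intro l _ hl
          rw [honb k l, if_neg (Ne.symm hl)]; ring
        · intro h; exact absurd hk h

lemma bessel (v : Fin n → Fin n → ℝ)
    (honb : ∀ k l, dot (v k) (v l) = if k = l then (1:ℝ) else 0)
    (y : Fin n → ℝ) (S : Finset (Fin n)) :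
    ∑ k ∈ S, (dot y (v k))^2 ≤ ∑ i, y i ^ 2 := by
  have hcross : ∑ i, y i * (∑ k ∈ S, dot y (v k) * v k i) = ∑ k ∈ S, (dot y (v k))^2 := by
    calc ∑ i, y i * (∑ k ∈ S, dot y (v k) * v k i)
        = ∑ i, ∑ k ∈ S, dot y (v k) * (y i * v k i) := by
          refine Finset.sum_congr rfl fun i _ => ?_
          rw [Finset.mul_sum]
          exact Finset.sum_congr rfl fun k _ => by ring
      _ = ∑ k ∈ S, ∑ i, dot y (v k) * (y i * v k i) := Finset.sum_comm
      _ = ∑ k ∈ S, (dot y (v k))^2 := by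
          refine Finset.sum_congr rfl fun k _ => ?_
          rw [← Finset.mul_sum]
          have h2 : ∑ i, y i * v k i = dot y (v k) := rfl
          rw [h2]; ring
  have h0 : (0:ℝ) ≤ ∑ i, (y i - ∑ k ∈ S, dot y (v k) * v k i)^2 :=
    Finset.sum_nonneg fun i _ => sq_nonneg _
  have hexp : ∑ i, (y i - ∑ k ∈ S, dot y (v k) * v k i)^2
      = ∑ i, y i^2 - 2 * (∑ i, y i * (∑ k ∈ S, dot y (v k) * v k i))
        + ∑ i, (∑ k ∈ S, dot y (v k) * v k i)^2 := by
    have hpt : ∀ i : Fin n, (y i - ∑ k ∈ S, dot y (v k) * v k i)^2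
        = y i^2 - 2*(y i * (∑ k ∈ S, dot y (v k) * v k i))
          + (∑ k ∈ S, dot y (v k) * v k i)^2 := fun i => by ring
    rw [Finset.sum_congr rfl fun i _ => hpt i, Finset.sum_add_distrib,
      Finset.sum_sub_distrib, ← Finset.mul_sum]
  have hps := proj_sq v honb (fun k => dot y (v k)) S
  rw [hexp, hcross, hps] at h0
  have hsq : ∀ i : Fin n, y i ^ 2 = y i^2 := fun i => rfl
  linarith [h0]

lemma crude_bound (v : Fin n → Fin n → ℝ)
    (honb : ∀ k l, dot (v k) (v l) = if k = l then (1:ℝ) else 0)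
    (y f0 : Fin n → ℝ) (S : Finset (Fin n)) :
    ∑ i, ((∑ k ∈ S, (∑ j, y j * v k j) • v k) i - f0 i)^2
      ≤ 2 * ∑ i, y i ^ 2 + 2 * ∑ i, f0 i ^ 2 := by
  have happ : ∀ i : Fin n, (∑ k ∈ S, (∑ j, y j * v k j) • v k) i
      = ∑ k ∈ S, dot y (v k) * v k i := by
    intro i
    rw [Finset.sum_apply]
    exact Finset.sum_congr rfl fun k _ => by rw [Pi.smul_apply, smul_eq_mul]; rfl
  rw [Finset.sum_congr rfl fun i (_ : i ∈ univ) => by rw [happ i]]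
  have h1 : ∀ i : Fin n, (∑ k ∈ S, dot y (v k) * v k i - f0 i)^2
      ≤ 2*(∑ k ∈ S, dot y (v k) * v k i)^2 + 2*(f0 i)^2 := by
    intro i
    nlinarith [sq_nonneg (∑ k ∈ S, dot y (v k) * v k i + f0 i)]
  calc ∑ i, (∑ k ∈ S, dot y (v k) * v k i - f0 i)^2
      ≤ ∑ i, (2*(∑ k ∈ S, dot y (v k) * v k i)^2 + 2*(f0 i)^2) :=
        Finset.sum_le_sum fun i _ => h1 i
    _ = 2 * ∑ i, (∑ k ∈ S, dot y (v k) * v k i)^2 + 2 * ∑ i, (f0 i)^2 := by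
        rw [Finset.sum_add_distrib, ← Finset.mul_sum, ← Finset.mul_sum]
    _ ≤ 2 * ∑ i, y i ^ 2 + 2 * ∑ i, f0 i ^ 2 := by
        have hps := proj_sq v honb (fun k => dot y (v k)) S
        have hb := bessel v honb y S
        rw [hps]
        have : ∑ i, (f0 i)^2 = ∑ i, f0 i ^ 2 := rfl
        rw [this]
        linarith [hb]

lemma clusterSignal_sq_le (r θ z : ℝ) : (clusterSignal r θ z)^2 ≤ θ^2 := by
  unfold clusterSignal
  rw [Set.indicator_apply, Set.indicator_apply]
  split <;> split <;> simp <;> nlinarith [sq_nonneg θ]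

lemma meas_clusterSignal (r θ : ℝ) : Measurable (clusterSignal r θ) := by
  unfold clusterSignal
  apply Measurable.mul measurable_const
  exact ((measurable_const.indicator (measurableSet_Icc)).sub
    (measurable_const.indicator (measurableSet_Icc)))

def GoodSet (r : ℝ) (n : ℕ) : Set (Fin n → ℝ) :=
  {x | (∀ i, x i ∈ Q1 r ∪ Q2 r) ∧ ∀ a : Bool, ∀ t, t < mR r → ∃ i, x i ∈ covI r a t}

lemma GoodSet_meas (r : ℝ) (n : ℕ) : MeasurableSet (GoodSet r n) := by
  have heq : GoodSet r n
      = (⋂ i, (fun x : Fin n → ℝ => x i) ⁻¹' (Q1 r ∪ Q2 r))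
        ∩ ⋂ (a : Bool), ⋂ (t : ℕ), ⋂ (_ : t < mR r),
            ⋃ i, (fun x : Fin n → ℝ => x i) ⁻¹' (covI r a t) := by
    ext x
    simp only [GoodSet, Set.mem_setOf_eq, Set.mem_inter_iff, Set.mem_iInter, Set.mem_iUnion,
      Set.mem_preimage]
  rw [heq]
  refine MeasurableSet.inter ?_ ?_
  · exact MeasurableSet.iInter fun i => (measurable_pi_apply i) (Q_union_meas r)
  · exact MeasurableSet.iInter fun a => MeasurableSet.iInter fun t =>
      MeasurableSet.iInter fun _ => MeasurableSet.iUnion fun i =>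
        (measurable_pi_apply i) (measurable_covI r a t)

lemma ind1_meas (r : ℝ) (n : ℕ) (i : Fin n) : Measurable (fun x : Fin n → ℝ => ind1 r x i) := by
  unfold ind1
  exact Measurable.ite ((measurable_pi_apply i) measurableSet_Icc) measurable_const
    measurable_const

lemma ind2_meas (r : ℝ) (n : ℕ) (i : Fin n) : Measurable (fun x : Fin n → ℝ => ind2 r x i) := by
  unfold ind2
  exact Measurable.ite ((measurable_pi_apply i) measurableSet_Icc) measurable_const
    measurable_const

lemma Nc1_meas (r : ℝ) (n : ℕ) : Measurable (fun x : Fin n → ℝ => Nc1 r x) := by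
  unfold Nc1
  exact Finset.measurable_sum _ fun i _ => ind1_meas r n i

lemma Nc2_meas (r : ℝ) (n : ℕ) : Measurable (fun x : Fin n → ℝ => Nc2 r x) := by
  unfold Nc2
  exact Finset.measurable_sum _ fun i _ => ind2_meas r n i

lemma ind1_vals (r : ℝ) (x : Fin n → ℝ) (i : Fin n) : ind1 r x i = 0 ∨ ind1 r x i = 1 := by
  unfold ind1; split
  · right; rfl
  · left; rfl

lemma ind2_vals (r : ℝ) (x : Fin n → ℝ) (i : Fin n) : ind2 r x i = 0 ∨ ind2 r x i = 1 := by
  unfold ind2; split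
  · right; rfl
  · left; rfl

lemma Nc1_good (hr : 0 < r) (hr4 : r ≤ 1/4) {n : ℕ} {x : Fin n → ℝ}
    (hx : x ∈ GoodSet r n) : 1 ≤ Nc1 r x := by
  obtain ⟨hxA, hcov⟩ := hx
  obtain ⟨i0, hi0⟩ := hcov false 0 (mR_pos hr)
  have hmem : x i0 ∈ Q1 r := by
    have h := covI_subset hr hr4 (mR_pos hr) hi0
    simpa using h
  have h1 := Finset.single_le_sum (f := fun i => ind1 r x i)
    (fun i _ => by show (0:ℝ) ≤ ind1 r x i; rcases ind1_vals r x i with h | h <;> rw [h] <;> norm_num)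
    (Finset.mem_univ i0)
  have h2 : ind1 r x i0 = 1 := by unfold ind1; rw [if_pos hmem]
  rw [h2] at h1
  exact h1

lemma Nc2_good (hr : 0 < r) (hr4 : r ≤ 1/4) {n : ℕ} {x : Fin n → ℝ}
    (hx : x ∈ GoodSet r n) : 1 ≤ Nc2 r x := by
  obtain ⟨hxA, hcov⟩ := hx
  obtain ⟨i0, hi0⟩ := hcov true 0 (mR_pos hr)
  have hmem : x i0 ∈ Q2 r := by
    have h := covI_subset hr hr4 (mR_pos hr) hi0
    simpa using h
  have h1 := Finset.single_le_sum (f := fun i => ind2 r x i)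
    (fun i _ => by show (0:ℝ) ≤ ind2 r x i; rcases ind2_vals r x i with h | h <;> rw [h] <;> norm_num)
    (Finset.mem_univ i0)
  have h2 : ind2 r x i0 = 1 := by unfold ind2; rw [if_pos hmem]
  rw [h2] at h1
  exact h1

/-- The coefficient kernel entering the good-event expansion. -/
noncomputable def psiK (r : ℝ) (n : ℕ) (i j : Fin n) : (Fin n → ℝ) → ℝ :=
  (GoodSet r n).indicator fun x =>
    (ind1 r x i * ind1 r x j) / Nc1 r x + (ind2 r x i * ind2 r x j) / Nc2 r x

lemma psiK_meas (r : ℝ) (n : ℕ) (i j : Fin n) : Measurable (psiK r n i j) := by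
  unfold psiK
  apply Measurable.indicator _ (GoodSet_meas r n)
  exact (((ind1_meas r n i).mul (ind1_meas r n j)).div (Nc1_meas r n)).add
    (((ind2_meas r n i).mul (ind2_meas r n j)).div (Nc2_meas r n))

lemma psiK_nonneg (hr : 0 < r) (hr4 : r ≤ 1/4) {n : ℕ} (i j : Fin n) (x : Fin n → ℝ) :
    0 ≤ psiK r n i j x := by
  unfold psiK
  rw [Set.indicator_apply]
  split
  · rename_i hx
    have h1 := Nc1_good hr hr4 hx
    have h2 := Nc2_good hr hr4 hx
    have hp1 : (0:ℝ) ≤ ind1 r x i * ind1 r x j := by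
      rcases ind1_vals r x i with h | h <;> rcases ind1_vals r x j with h' | h' <;>
        rw [h, h'] <;> norm_num
    have hp2 : (0:ℝ) ≤ ind2 r x i * ind2 r x j := by
      rcases ind2_vals r x i with h | h <;> rcases ind2_vals r x j with h' | h' <;>
        rw [h, h'] <;> norm_num
    have := div_nonneg hp1 (by linarith : (0:ℝ) ≤ Nc1 r x)
    have := div_nonneg hp2 (by linarith : (0:ℝ) ≤ Nc2 r x)
    linarith
  · exact le_refl 0

lemma psiK_le_two (hr : 0 < r) (hr4 : r ≤ 1/4) {n : ℕ} (i j : Fin n) (x : Fin n → ℝ) :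
    psiK r n i j x ≤ 2 := by
  unfold psiK
  rw [Set.indicator_apply]
  split
  · rename_i hx
    have h1 := Nc1_good hr hr4 hx
    have h2 := Nc2_good hr hr4 hx
    have hp1 : ind1 r x i * ind1 r x j ≤ 1 := by
      rcases ind1_vals r x i with h | h <;> rcases ind1_vals r x j with h' | h' <;>
        rw [h, h'] <;> norm_num
    have hp1' : (0:ℝ) ≤ ind1 r x i * ind1 r x j := by
      rcases ind1_vals r x i with h | h <;> rcases ind1_vals r x j with h' | h' <;>
        rw [h, h'] <;> norm_num
    have hp2 : ind2 r x i * ind2 r x j ≤ 1 := by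
      rcases ind2_vals r x i with h | h <;> rcases ind2_vals r x j with h' | h' <;>
        rw [h, h'] <;> norm_num
    have hp2' : (0:ℝ) ≤ ind2 r x i * ind2 r x j := by
      rcases ind2_vals r x i with h | h <;> rcases ind2_vals r x j with h' | h' <;>
        rw [h, h'] <;> norm_num
    have hd1 : (ind1 r x i * ind1 r x j) / Nc1 r x ≤ 1 :=
      div_le_one_of_le₀ (by linarith) (by linarith)
    have hd2 : (ind2 r x i * ind2 r x j) / Nc2 r x ≤ 1 :=
      div_le_one_of_le₀ (by linarith) (by linarith)
    linarith
  · norm_num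

/-- trace identity on the good set -/
lemma psiK_trace (hr : 0 < r) (hr4 : r ≤ 1/4) {n : ℕ} (x : Fin n → ℝ) :
    ∑ i, psiK r n i i x ≤ 2 := by
  by_cases hx : x ∈ GoodSet r n
  · have h1 := Nc1_good hr hr4 hx
    have h2 := Nc2_good hr hr4 hx
    have heq : ∑ i, psiK r n i i x = Nc1 r x / Nc1 r x + Nc2 r x / Nc2 r x := by
      unfold psiK
      rw [Finset.sum_congr rfl fun i (_ : i ∈ univ) => Set.indicator_of_mem hx _]
      rw [Finset.sum_add_distrib]
      congr 1
      · rw [← Finset.sum_div]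
        congr 1
        unfold Nc1
        refine Finset.sum_congr rfl fun i _ => ?_
        rcases ind1_vals r x i with h | h <;> rw [h] <;> norm_num
      · rw [← Finset.sum_div]
        congr 1
        unfold Nc2
        refine Finset.sum_congr rfl fun i _ => ?_
        rcases ind2_vals r x i with h | h <;> rw [h] <;> norm_num
    rw [heq, div_self (by linarith), div_self (by linarith)]
    norm_num
  · have heq : ∑ i, psiK r n i i x = 0 := by
      apply Finset.sum_eq_zero
      intro i _
      unfold psiK
      exact Set.indicator_of_notMem hx _
    rw [heq]
    norm_num

-- ===== probability of the bad event =====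

lemma one_sub_le_exp_neg (q : ℝ) : 1 - q ≤ Real.exp (-q) := by
  have h := Real.add_one_le_exp (-q)
  linarith

lemma bad_prob {r : ℝ} (hr : 0 < r) (hr4 : r ≤ 1/4) {n : ℕ} (hn : 1 ≤ n)
    {Ω : Type} [MeasurableSpace Ω] (P : Measure Ω) [IsProbabilityMeasure P]
    (X : Fin n → Ω → ℝ) (hXm : ∀ i, Measurable (X i))
    (hXi : iIndepFun X P)
    (hXd : ∀ i, P.map (X i) = unifQ r) :
    P ((fun ω (i : Fin n) => X i ω) ⁻¹' (GoodSet r n))ᶜ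
      ≤ ENNReal.ofReal ((6/r) * Real.exp (-(n:ℝ) * r / 8)) := by
  haveI hPunif : IsProbabilityMeasure (unifQ r) := by
    rw [← hXd ⟨0, hn⟩]
    exact Measure.isProbabilityMeasure_map (hXm _).aemeasurable
  set q : ℝ := 1 / (2 * (mR r : ℝ)) with hqdef
  have hq0 : 0 ≤ q := by
    have := mR_pos hr
    positivity
  have hq1 : q ≤ 1 := unifQ_covI_le_one hr hr4
  have hq6 : r / 6 ≤ q := unifQ_covI_ge hr hr4
  -- the bad event is contained in a finite union
  have hsub : ((fun ω (i : Fin n) => X i ω) ⁻¹' (GoodSet r n))ᶜ ⊆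
      (⋃ i, X i ⁻¹' (Q1 r ∪ Q2 r)ᶜ) ∪
        ⋃ (a : Bool), ⋃ t ∈ Finset.range (mR r), ⋂ i, X i ⁻¹' (covI r a t)ᶜ := by
    intro ω hω
    simp only [Set.mem_compl_iff, Set.mem_preimage, GoodSet, Set.mem_setOf_eq] at hω
    by_cases hA : ∀ i, X i ω ∈ Q1 r ∪ Q2 r
    · push_neg at hω
      obtain ⟨a, t, ht, hforall⟩ := hω hA
      right
      simp only [Set.mem_iUnion, Set.mem_iInter, Set.mem_preimage, Set.mem_compl_iff,
        Finset.mem_range]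
      exact ⟨a, t, ht, hforall⟩
    · left
      push_neg at hA
      obtain ⟨i, hi⟩ := hA
      simp only [Set.mem_iUnion, Set.mem_preimage, Set.mem_compl_iff]
      exact ⟨i, hi⟩
  refine le_trans (measure_mono hsub) ?_
  refine le_trans (measure_union_le _ _) ?_
  have hzero : P (⋃ i, X i ⁻¹' (Q1 r ∪ Q2 r)ᶜ) = 0 := by
    apply measure_iUnion_null
    intro i
    rw [← Measure.map_apply (hXm i) (Q_union_meas r).compl, hXd i]
    unfold unifQ
    rw [Measure.smul_apply, Measure.restrict_apply (Q_union_meas r).compl]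
    rw [Set.compl_inter_self]
    simp
  rw [hzero, zero_add]
  -- each intersection event
  have hkey : ∀ (a : Bool), ∀ t ∈ Finset.range (mR r),
      P (⋂ i, X i ⁻¹' (covI r a t)ᶜ) ≤ ENNReal.ofReal (Real.exp (-(n:ℝ) * r / 8)) := by
    intro a t ht
    rw [Finset.mem_range] at ht
    have hprod : P (⋂ i, X i ⁻¹' (covI r a t)ᶜ) = ∏ i, P (X i ⁻¹' (covI r a t)ᶜ) := by
      apply hXi.meas_iInter
      intro i
      exact ⟨(covI r a t)ᶜ, (measurable_covI r a t).compl, rfl⟩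
    rw [hprod]
    have hone : ∀ i : Fin n, P (X i ⁻¹' (covI r a t)ᶜ) = ENNReal.ofReal (1 - q) := by
      intro i
      rw [← Measure.map_apply (hXm i) (measurable_covI r a t).compl, hXd i]
      rw [measure_compl (measurable_covI r a t) (measure_ne_top _ _)]
      rw [measure_univ, unifQ_covI hr hr4 ht]
      rw [← ENNReal.ofReal_one, ← ENNReal.ofReal_sub _ hq0]
    rw [Finset.prod_congr rfl fun i _ => hone i]
    rw [Finset.prod_const, Finset.card_univ, Fintype.card_fin]
    rw [← ENNReal.ofReal_pow (by linarith)]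
    apply ENNReal.ofReal_le_ofReal
    calc (1 - q)^n ≤ (Real.exp (-q))^n :=
          pow_le_pow_left₀ (by linarith) (one_sub_le_exp_neg q) n
      _ = Real.exp ((n:ℝ) * (-q)) := (Real.exp_nat_mul _ n).symm
      _ ≤ Real.exp (-(n:ℝ) * r / 8) := by
          apply Real.exp_le_exp.mpr
          have hn0 : (0:ℝ) ≤ n := Nat.cast_nonneg n
          have : r / 8 ≤ q := by linarith
          calc (n:ℝ) * (-q) ≤ (n:ℝ) * (-(r/8)) :=
                mul_le_mul_of_nonneg_left (by linarith) hn0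
            _ = -(n:ℝ) * r / 8 := by ring
  calc P (⋃ (a : Bool), ⋃ t ∈ Finset.range (mR r), ⋂ i, X i ⁻¹' (covI r a t)ᶜ)
      ≤ ∑' (a : Bool), P (⋃ t ∈ Finset.range (mR r), ⋂ i, X i ⁻¹' (covI r a t)ᶜ) :=
        measure_iUnion_le _
    _ ≤ ∑' (a : Bool), ∑ t ∈ Finset.range (mR r), P (⋂ i, X i ⁻¹' (covI r a t)ᶜ) := by
        apply ENNReal.tsum_le_tsum
        intro a
        exact measure_biUnion_finset_le _ _
    _ ≤ ∑' (a : Bool), ∑ t ∈ Finset.range (mR r),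
          ENNReal.ofReal (Real.exp (-(n:ℝ) * r / 8)) := by
        apply ENNReal.tsum_le_tsum
        intro a
        exact Finset.sum_le_sum (hkey a)
    _ = 2 * ((mR r : ℝ≥0∞) * ENNReal.ofReal (Real.exp (-(n:ℝ) * r / 8))) := by
        rw [tsum_bool]
        rw [Finset.sum_const, Finset.card_range]
        rw [two_mul]
        congr 1 <;> rw [nsmul_eq_mul]
    _ ≤ ENNReal.ofReal ((6/r) * Real.exp (-(n:ℝ) * r / 8)) := by
        rw [← mul_assoc]
        have h2m : (2 : ℝ≥0∞) * (mR r : ℝ≥0∞) = ENNReal.ofReal (2 * (mR r : ℝ)) := by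
          rw [ENNReal.ofReal_mul (by norm_num)]
          congr 1
          · rw [← ENNReal.ofReal_ofNat]
          · rw [ENNReal.ofReal_natCast]
        rw [h2m, ← ENNReal.ofReal_mul (by positivity)]
        apply ENNReal.ofReal_le_ofReal
        have hmle : (mR r : ℝ) ≤ 3 / r := mR_le hr hr4
        have hexp : (0:ℝ) ≤ Real.exp (-(n:ℝ) * r / 8) := (Real.exp_pos _).le
        have h6 : 2 * (mR r : ℝ) ≤ 6 / r := by
          rw [show (6:ℝ)/r = 2 * (3/r) by ring]
          linarith
        exact mul_le_mul_of_nonneg_right h6 hexp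

end PCRAux

open PCRAux

set_option maxHeartbeats 2000000

/-- cluster-assumption risk bound for PCR with Laplacian eigenmaps (K = 2,
boxcar kernel, radius `ε = r/2`).  There is a universal constant `C > 0` such that for any
`0 < r ≤ 1/4`, `θ ∈ ℝ`, design `X₁,…,Xₙ` i.i.d. uniform on `Q₁ ∪ Q₂`, noise `w₁,…,wₙ` i.i.d.
standard Gaussian independent of the design, and any measurable choice `v₀, v₁` of orthonormal
(Euclidean) eigenvectors of the graph Laplacian corresponding to its two smallest eigenvalues
(a monotone enumeration `lam` of the spectrum with orthonormal eigenbasis `v`), the estimator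
`f̂ =` Euclidean projection of `Y` onto `span{v₀, v₁}` satisfies
`E[(1/n) ∑ᵢ (f̂ᵢ - f₀(Xᵢ))²] ≤ C((θ² + 1)(1/r) exp(-nr/8) + 1/n)`. -/
theorem pcr_le_cluster_risk_bound :
    ∃ C > 0, ∀ (r θ : ℝ), 0 < r → r ≤ 1 / 4 →
      ∀ (n : ℕ), 1 ≤ n →
      ∀ (Ω : Type) [MeasurableSpace Ω] (P : Measure Ω) [IsProbabilityMeasure P]
        (X : Fin n → Ω → ℝ) (w : Fin n → Ω → ℝ),
        (∀ i, Measurable (X i)) →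
        (∀ i, Measurable (w i)) →
        iIndepFun X P →
        (∀ i, P.map (X i) = unifQ r) →
        iIndepFun w P →
        (∀ i, P.map (w i) = gaussianReal 0 1) →
        IndepFun (fun ω (i : Fin n) => X i ω) (fun ω (i : Fin n) => w i ω) P →
        ∀ (lam : Ω → Fin n → ℝ) (v : Ω → Fin n → Fin n → ℝ),
        (∀ k : Fin n, (k : ℕ) < 2 → Measurable fun ω => v ω k) →
        (∀ ω, Monotone (lam ω)) →
        (∀ ω k, (laplacianMatrix n (fun i => X i ω) (r / 2)).mulVec (v ω k)
            = lam ω k • v ω k) →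
        (∀ ω k l, (∑ i, v ω k i * v ω l i) = if k = l then (1 : ℝ) else 0) →
        (∫ ω, (1 / (n : ℝ)) * ∑ i,
            ((∑ k ∈ univ.filter fun k : Fin n => (k : ℕ) < 2,
                (∑ j, (clusterSignal r θ (X j ω) + w j ω) * v ω k j) • v ω k) i
              - clusterSignal r θ (X i ω)) ^ 2 ∂P)
          ≤ C * ((θ ^ 2 + 1) * (1 / r) * Real.exp (-(n : ℝ) * r / 8) + 1 / n) := by
  refine ⟨96, by norm_num, ?_⟩
  intro r θ hr hr4 n hn Ω _ P _ X w hXm hwm hXi hXd hwi hwd hXW lam v hvmeas hmono heig honb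
  have hnR : (0:ℝ) < n := by exact_mod_cast hn
  have hnne : (n:ℝ) ≠ 0 := ne_of_gt hnR
  have hXXm : Measurable (fun ω (i : Fin n) => X i ω) := measurable_pi_lambda _ hXm
  have hGmeas : MeasurableSet (GoodSet r n) := GoodSet_meas r n
  set χ : (Fin n → ℝ) → ℝ := Set.indicator (GoodSet r n)ᶜ (fun _ => (1:ℝ)) with hχdef
  have hχmeas : Measurable χ := measurable_const.indicator hGmeas.compl
  have hχbd : ∀ x, |χ x| ≤ 1 := by
    intro x
    rw [hχdef, Set.indicator_apply]
    split <;> norm_num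
  -- gaussian facts
  have hw1 : ∀ i, Integrable (w i) P := by
    intro i
    have h : Integrable (fun x : ℝ => x) (P.map (w i)) := by
      rw [hwd i]; exact gauss_integrable_id
    exact (integrable_map_measure measurable_id.aestronglyMeasurable
      (hwm i).aemeasurable).mp h
  have hEw : ∀ i, ∫ ω, w i ω ∂P = 0 := by
    intro i
    have h : ∫ x, x ∂(P.map (w i)) = ∫ ω, w i ω ∂P :=
      integral_map (hwm i).aemeasurable measurable_id.aestronglyMeasurable
    rw [← h, hwd i]
    exact gauss_integral_id
  have hww_int : ∀ i, Integrable (fun ω => w i ω * w i ω) P := by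
    intro i
    have h : Integrable (fun x : ℝ => x * x) (P.map (w i)) := by
      rw [hwd i]
      exact gauss_integrable_sq.congr (Filter.Eventually.of_forall fun x => sq x)
    exact (integrable_map_measure ((measurable_id.mul measurable_id).aestronglyMeasurable)
      (hwm i).aemeasurable).mp h
  have hEww_le : ∀ i, ∫ ω, w i ω * w i ω ∂P ≤ 4 := by
    intro i
    have h : ∫ x, x * x ∂(P.map (w i)) = ∫ ω, w i ω * w i ω ∂P :=
      integral_map (hwm i).aemeasurable (measurable_id.mul measurable_id).aestronglyMeasurable
    rw [← h, hwd i]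
    have h2 : ∫ x, x * x ∂(gaussianReal 0 1) = ∫ x, x^2 ∂(gaussianReal 0 1) := by
      congr 1; funext x; rw [sq]
    rw [h2]
    exact gauss_integral_sq_le
  have hEww_nonneg : ∀ i, 0 ≤ ∫ ω, w i ω * w i ω ∂P :=
    fun i => integral_nonneg fun ω => mul_self_nonneg _
  have hEww0 : ∀ i j, i ≠ j → ∫ ω, w i ω * w j ω ∂P = 0 := by
    intro i j hij
    have hind := hwi.indepFun hij
    have h := hind.integral_mul_eq_mul_integral (hw1 i).aestronglyMeasurable (hw1 j).aestronglyMeasurable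
    have h2 : ∫ ω, w i ω * w j ω ∂P = ∫ ω, (w i * w j) ω ∂P := rfl
    rw [h2, h, hEw i, hEw j, mul_zero]
  -- bounded functionals of the design
  have hXint : ∀ (φ : (Fin n → ℝ) → ℝ) (c : ℝ), Measurable φ → (∀ x, |φ x| ≤ c) →
      Integrable (fun ω => φ (fun i => X i ω)) P := by
    intro φ c hφ hb
    refine (integrable_const c).mono' ((hφ.comp hXXm).aestronglyMeasurable)
      (Filter.Eventually.of_forall fun ω => ?_)
    simpa using hb _
  have hprod : ∀ (φ : (Fin n → ℝ) → ℝ) (c : ℝ), Measurable φ → (∀ x, |φ x| ≤ c) →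
      ∀ i j : Fin n,
      Integrable (fun ω => φ (fun i' => X i' ω) * (w i ω * w j ω)) P ∧
      ∫ ω, φ (fun i' => X i' ω) * (w i ω * w j ω) ∂P
        = (∫ ω, φ (fun i' => X i' ω) ∂P) * ∫ ω, w i ω * w j ω ∂P := by
    intro φ c hφ hb i j
    have hij_int : Integrable (fun ω => w i ω * w j ω) P := by
      by_cases hij : i = j
      · subst hij; exact hww_int i
      · exact (hwi.indepFun hij).integrable_mul (hw1 i) (hw1 j)
    have hIndep : IndepFun (fun ω => φ (fun i' => X i' ω)) (fun ω => w i ω * w j ω) P := by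
      have h := hXW.comp hφ ((measurable_pi_apply i).mul (measurable_pi_apply j))
      exact h
    exact ⟨hIndep.integrable_mul (hXint φ c hφ hb) hij_int,
      hIndep.integral_fun_mul_eq_mul_integral (hXint φ c hφ hb).aestronglyMeasurable hij_int.aestronglyMeasurable⟩
  -- the error function and dominating function
  set f : Ω → ℝ := fun ω => (1 / (n : ℝ)) * ∑ i,
      ((∑ k ∈ univ.filter fun k : Fin n => (k : ℕ) < 2,
          (∑ j, (clusterSignal r θ (X j ω) + w j ω) * v ω k j) • v ω k) i
        - clusterSignal r θ (X i ω)) ^ 2 with hfdef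
  set F : Ω → ℝ := fun ω =>
      (1/(n:ℝ)) * ∑ i, ∑ j, psiK r n i j (fun i' => X i' ω) * (w i ω * w j ω)
      + (6*θ^2) * χ (fun i' => X i' ω)
      + (4/(n:ℝ)) * ∑ i, χ (fun i' => X i' ω) * (w i ω * w i ω) with hFdef
  have hf_nonneg : ∀ ω, 0 ≤ f ω := by
    intro ω
    rw [hfdef]
    exact mul_nonneg (by positivity) (Finset.sum_nonneg fun i _ => sq_nonneg _)
  -- pointwise domination
  have hpt : ∀ ω, f ω ≤ F ω := by
    intro ω
    by_cases hg : (fun i => X i ω) ∈ GoodSet r n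
    · have hχ0 : χ (fun i => X i ω) = 0 := by
        rw [hχdef]
        exact Set.indicator_of_notMem (by simpa using hg) _
      have hgee := good_event_eq (θ := θ) hr hr4 (fun i => X i ω) hg.1 (fun a t ht => hg.2 a t ht)
        (lam ω) (v ω) (hmono ω) (fun k => heig ω k) (fun k l => honb ω k l)
        (fun i => w i ω)
      have hterm1 : ∑ i, ∑ j, psiK r n i j (fun i' => X i' ω) * (w i ω * w j ω)
          = (sc1 r (fun i' => X i' ω) (fun i' => w i' ω))^2 / Nc1 r (fun i' => X i' ω)
            + (sc2 r (fun i' => X i' ω) (fun i' => w i' ω))^2 / Nc2 r (fun i' => X i' ω) := by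
        have hpsi : ∀ i j : Fin n, psiK r n i j (fun i' => X i' ω)
            = (ind1 r (fun i' => X i' ω) i * ind1 r (fun i' => X i' ω) j)
                / Nc1 r (fun i' => X i' ω)
              + (ind2 r (fun i' => X i' ω) i * ind2 r (fun i' => X i' ω) j)
                / Nc2 r (fun i' => X i' ω) := by
          intro i j
          unfold psiK
          exact Set.indicator_of_mem hg _
        calc ∑ i, ∑ j, psiK r n i j (fun i' => X i' ω) * (w i ω * w j ω)
            = ∑ i, ∑ j,
                ((ind1 r (fun i' => X i' ω) i * w i ω) * (ind1 r (fun i' => X i' ω) j * w j ω)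
                    / Nc1 r (fun i' => X i' ω)
                  + (ind2 r (fun i' => X i' ω) i * w i ω) * (ind2 r (fun i' => X i' ω) j * w j ω)
                    / Nc2 r (fun i' => X i' ω)) := by
              refine Finset.sum_congr rfl fun i _ => Finset.sum_congr rfl fun j _ => ?_
              rw [hpsi i j]
              ring
          _ = (∑ i, ∑ j, (ind1 r (fun i' => X i' ω) i * w i ω)
                  * (ind1 r (fun i' => X i' ω) j * w j ω)) / Nc1 r (fun i' => X i' ω)
              + (∑ i, ∑ j, (ind2 r (fun i' => X i' ω) i * w i ω)
                  * (ind2 r (fun i' => X i' ω) j * w j ω)) / Nc2 r (fun i' => X i' ω) := by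
              rw [Finset.sum_div, Finset.sum_div]
              rw [← Finset.sum_add_distrib]
              refine Finset.sum_congr rfl fun i _ => ?_
              rw [Finset.sum_div, Finset.sum_div]
              rw [← Finset.sum_add_distrib]
          _ = _ := by
              congr 1
              · congr 1
                rw [sq]
                unfold sc1
                rw [Finset.sum_mul_sum]
              · congr 1
                rw [sq]
                unfold sc2
                rw [Finset.sum_mul_sum]
      rw [hfdef, hFdef]
      simp only
      rw [hgee, hχ0, hterm1]
      have hz : ∑ i : Fin n, (0:ℝ) * (w i ω * w i ω) = 0 := by
        apply Finset.sum_eq_zero; intro i _; ring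
      rw [hz]
      ring_nf
      exact le_refl _
    · have hχ1 : χ (fun i => X i ω) = 1 := by
        rw [hχdef]
        exact Set.indicator_of_mem (by simpa using hg) _
      have hψ0 : ∀ i j : Fin n, psiK r n i j (fun i' => X i' ω) = 0 := by
        intro i j
        unfold psiK
        exact Set.indicator_of_notMem hg _
      have hcrude := crude_bound (v ω) (fun k l => honb ω k l)
        (fun j => clusterSignal r θ (X j ω) + w j ω)
        (fun i => clusterSignal r θ (X i ω))
        (univ.filter fun k : Fin n => (k : ℕ) < 2)
      have hf0 : ∑ i, (clusterSignal r θ (X i ω))^2 ≤ (n:ℝ)*θ^2 := by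
        calc ∑ i, (clusterSignal r θ (X i ω))^2 ≤ ∑ i : Fin n, θ^2 :=
              Finset.sum_le_sum fun i _ => clusterSignal_sq_le r θ _
          _ = (n:ℝ)*θ^2 := by
              rw [Finset.sum_const, Finset.card_univ, Fintype.card_fin, nsmul_eq_mul]
      have hy : ∑ i, (clusterSignal r θ (X i ω) + w i ω)^2
          ≤ 2*((n:ℝ)*θ^2) + 2*∑ i, w i ω * w i ω := by
        have h1 : ∀ i : Fin n, (clusterSignal r θ (X i ω) + w i ω)^2
            ≤ 2*(clusterSignal r θ (X i ω))^2 + 2*(w i ω * w i ω) := by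
          intro i
          nlinarith [sq_nonneg (clusterSignal r θ (X i ω) - w i ω)]
        calc ∑ i, (clusterSignal r θ (X i ω) + w i ω)^2
            ≤ ∑ i, (2*(clusterSignal r θ (X i ω))^2 + 2*(w i ω * w i ω)) :=
              Finset.sum_le_sum fun i _ => h1 i
          _ = 2*∑ i, (clusterSignal r θ (X i ω))^2 + 2*∑ i, w i ω * w i ω := by
              rw [Finset.sum_add_distrib, ← Finset.mul_sum, ← Finset.mul_sum]
          _ ≤ 2*((n:ℝ)*θ^2) + 2*∑ i, w i ω * w i ω := by
              have := hf0
              linarith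
      rw [hfdef, hFdef]
      simp only
      rw [hχ1]
      have hz1 : ∑ i, ∑ j, psiK r n i j (fun i' => X i' ω) * (w i ω * w j ω) = 0 := by
        apply Finset.sum_eq_zero; intro i _
        apply Finset.sum_eq_zero; intro j _
        rw [hψ0 i j]; ring
      rw [hz1]
      have hsum_le : ∑ i,
          ((∑ k ∈ univ.filter fun k : Fin n => (k : ℕ) < 2,
              (∑ j, (clusterSignal r θ (X j ω) + w j ω) * v ω k j) • v ω k) i
            - clusterSignal r θ (X i ω)) ^ 2
          ≤ 6*((n:ℝ)*θ^2) + 4*∑ i, w i ω * w i ω := by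
        have hy2 : ∑ i, (clusterSignal r θ (X i ω) + w i ω) ^ 2
            ≤ 2*((n:ℝ)*θ^2) + 2*∑ i, w i ω * w i ω := hy
        have hf02 : ∑ i, (clusterSignal r θ (X i ω)) ^ 2 ≤ (n:ℝ)*θ^2 := hf0
        linarith [hcrude]
      have hn1 : (0:ℝ) ≤ 1/(n:ℝ) := by positivity
      have := mul_le_mul_of_nonneg_left hsum_le hn1
      calc (1/(n:ℝ)) * ∑ i,
          ((∑ k ∈ univ.filter fun k : Fin n => (k : ℕ) < 2,
              (∑ j, (clusterSignal r θ (X j ω) + w j ω) * v ω k j) • v ω k) i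
            - clusterSignal r θ (X i ω)) ^ 2
          ≤ (1/(n:ℝ)) * (6*((n:ℝ)*θ^2) + 4*∑ i, w i ω * w i ω) := this
        _ = (1/(n:ℝ)) * 0 + (6*θ^2) * 1 + (4/(n:ℝ)) * ∑ i, 1 * (w i ω * w i ω) := by
            field_simp
            ring
  -- integrability
  have hψprod : ∀ i j : Fin n,
      Integrable (fun ω => psiK r n i j (fun i' => X i' ω) * (w i ω * w j ω)) P ∧
      ∫ ω, psiK r n i j (fun i' => X i' ω) * (w i ω * w j ω) ∂P
        = (∫ ω, psiK r n i j (fun i' => X i' ω) ∂P) * ∫ ω, w i ω * w j ω ∂P := by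
    intro i j
    refine hprod (psiK r n i j) 2 (psiK_meas r n i j) (fun x => ?_) i j
    rw [abs_of_nonneg (psiK_nonneg hr hr4 i j x)]
    exact psiK_le_two hr hr4 i j x
  have hχprod : ∀ i : Fin n,
      Integrable (fun ω => χ (fun i' => X i' ω) * (w i ω * w i ω)) P ∧
      ∫ ω, χ (fun i' => X i' ω) * (w i ω * w i ω) ∂P
        = (∫ ω, χ (fun i' => X i' ω) ∂P) * ∫ ω, w i ω * w i ω ∂P :=
    fun i => hprod χ 1 hχmeas hχbd i i
  have hψint : ∀ i j : Fin n, Integrable (fun ω => psiK r n i j (fun i' => X i' ω)) P := by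
    intro i j
    refine hXint (psiK r n i j) 2 (psiK_meas r n i j) (fun x => ?_)
    rw [abs_of_nonneg (psiK_nonneg hr hr4 i j x)]
    exact psiK_le_two hr hr4 i j x
  have hχint : Integrable (fun ω => χ (fun i' => X i' ω)) P := hXint χ 1 hχmeas hχbd
  have hT1int : Integrable (fun ω => ∑ i, ∑ j,
      psiK r n i j (fun i' => X i' ω) * (w i ω * w j ω)) P :=
    integrable_finset_sum _ fun i _ => integrable_finset_sum _ fun j _ => (hψprod i j).1
  have hT3int : Integrable (fun ω => ∑ i,
      χ (fun i' => X i' ω) * (w i ω * w i ω)) P :=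
    integrable_finset_sum _ fun i _ => (hχprod i).1
  have hFint : Integrable F P := by
    rw [hFdef]
    exact ((hT1int.const_mul _).add (hχint.const_mul _)).add (hT3int.const_mul _)
  -- measurability of f
  have hvj : ∀ k : Fin n, (k:ℕ) < 2 → ∀ j : Fin n, Measurable (fun ω => v ω k j) :=
    fun k hk j => (measurable_pi_apply j).comp (hvmeas k hk)
  have hcsX : ∀ j : Fin n, Measurable (fun ω => clusterSignal r θ (X j ω)) :=
    fun j => (meas_clusterSignal r θ).comp (hXm j)
  have hfmeas : Measurable f := by
    rw [hfdef]
    apply Measurable.const_mul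
    apply Finset.measurable_sum
    intro i _
    apply Measurable.pow_const
    apply Measurable.sub _ (hcsX i)
    have heq : (fun ω => (∑ k ∈ univ.filter fun k : Fin n => (k : ℕ) < 2,
        (∑ j, (clusterSignal r θ (X j ω) + w j ω) * v ω k j) • v ω k) i)
        = fun ω => ∑ k ∈ univ.filter fun k : Fin n => (k : ℕ) < 2,
            (∑ j, (clusterSignal r θ (X j ω) + w j ω) * v ω k j) * v ω k i := by
      funext ω
      rw [Finset.sum_apply]
      exact Finset.sum_congr rfl fun k _ => by rw [Pi.smul_apply, smul_eq_mul]
    rw [heq]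
    apply Finset.measurable_sum
    intro k hk
    have hk2 : (k:ℕ) < 2 := (Finset.mem_filter.mp hk).2
    apply Measurable.mul _ (hvj k hk2 i)
    apply Finset.measurable_sum
    intro j _
    exact ((hcsX j).add (hwm j)).mul (hvj k hk2 j)
  have hfint : Integrable f P := by
    refine hFint.mono' hfmeas.aestronglyMeasurable
      (Filter.Eventually.of_forall fun ω => ?_)
    rw [Real.norm_eq_abs, abs_of_nonneg (hf_nonneg ω)]
    exact hpt ω
  have hIle : ∫ ω, f ω ∂P ≤ ∫ ω, F ω ∂P := integral_mono hfint hFint hpt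
  -- bad-event probability
  set Pb : ℝ := (P ((fun ω (i : Fin n) => X i ω) ⁻¹' (GoodSet r n))ᶜ).toReal with hPbdef
  have hPb_nonneg : 0 ≤ Pb := ENNReal.toReal_nonneg
  have hPb : Pb ≤ (6/r) * Real.exp (-(n:ℝ)*r/8) := by
    rw [hPbdef]
    refine ENNReal.toReal_le_of_le_ofReal ?_ (bad_prob hr hr4 hn P X hXm hXi hXd)
    exact mul_nonneg (div_nonneg (by norm_num) hr.le) (Real.exp_pos _).le
  -- value of ∫ χ
  have hχval : ∫ ω, χ (fun i' => X i' ω) ∂P = Pb := by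
    have heq : (fun ω => χ (fun i' => X i' ω))
        = Set.indicator ((fun ω (i : Fin n) => X i ω) ⁻¹' (GoodSet r n)ᶜ) (fun _ => (1:ℝ)) := by
      funext ω
      rw [hχdef]
      by_cases h : (fun i => X i ω) ∈ (GoodSet r n)ᶜ
      · rw [Set.indicator_of_mem h, Set.indicator_of_mem
          (show ω ∈ (fun ω (i : Fin n) => X i ω) ⁻¹' (GoodSet r n)ᶜ from h)]
      · rw [Set.indicator_of_notMem h, Set.indicator_of_notMem
          (show ω ∉ (fun ω (i : Fin n) => X i ω) ⁻¹' (GoodSet r n)ᶜ from h)]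
    rw [heq, integral_indicator_const (1:ℝ) (hXXm hGmeas.compl)]
    rw [hPbdef, Set.preimage_compl, smul_eq_mul, mul_one]
    rfl
  -- integral of the first term
  have hT1val : ∫ ω, ∑ i, ∑ j,
      psiK r n i j (fun i' => X i' ω) * (w i ω * w j ω) ∂P ≤ 8 := by
    rw [integral_finset_sum _
      (fun i _ => integrable_finset_sum _ (fun j _ => (hψprod i j).1))]
    rw [Finset.sum_congr rfl fun i (_ : i ∈ univ) =>
      integral_finset_sum _ (fun j _ => (hψprod i j).1)]
    have hdiag : ∀ i : Fin n, ∑ j, ∫ ω,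
        psiK r n i j (fun i' => X i' ω) * (w i ω * w j ω) ∂P
        = (∫ ω, psiK r n i i (fun i' => X i' ω) ∂P) * ∫ ω, w i ω * w i ω ∂P := by
      intro i
      rw [Finset.sum_eq_single i]
      · exact (hψprod i i).2
      · intro j _ hj
        rw [(hψprod i j).2, hEww0 i j (Ne.symm hj), mul_zero]
      · intro h; exact absurd (Finset.mem_univ i) h
    rw [Finset.sum_congr rfl fun i _ => hdiag i]
    have hψii_nonneg : ∀ i : Fin n, 0 ≤ ∫ ω, psiK r n i i (fun i' => X i' ω) ∂P :=
      fun i => integral_nonneg fun ω => psiK_nonneg hr hr4 i i _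
    have hstep : ∀ i : Fin n,
        (∫ ω, psiK r n i i (fun i' => X i' ω) ∂P) * ∫ ω, w i ω * w i ω ∂P
        ≤ 4 * ∫ ω, psiK r n i i (fun i' => X i' ω) ∂P := by
      intro i
      nlinarith [hψii_nonneg i, hEww_le i, hEww_nonneg i]
    calc ∑ i, (∫ ω, psiK r n i i (fun i' => X i' ω) ∂P) * ∫ ω, w i ω * w i ω ∂P
        ≤ ∑ i, 4 * ∫ ω, psiK r n i i (fun i' => X i' ω) ∂P :=
          Finset.sum_le_sum fun i _ => hstep i
      _ = 4 * ∑ i, ∫ ω, psiK r n i i (fun i' => X i' ω) ∂P := by rw [← Finset.mul_sum]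
      _ = 4 * ∫ ω, ∑ i, psiK r n i i (fun i' => X i' ω) ∂P := by
          rw [integral_finset_sum _ (fun i _ => hψint i i)]
      _ ≤ 4 * 2 := by
          have hmono2 : ∫ ω, ∑ i, psiK r n i i (fun i' => X i' ω) ∂P
              ≤ ∫ _ω, (2:ℝ) ∂P := by
            apply integral_mono (integrable_finset_sum _ (fun i _ => hψint i i))
              (integrable_const 2)
            intro ω
            exact psiK_trace hr hr4 _
          rw [integral_const, probReal_univ, smul_eq_mul, one_mul] at hmono2
          linarith
      _ = 8 := by norm_num
  -- integral of the third term
  have hT3val : ∑ i, ∫ ω, χ (fun i' => X i' ω) * (w i ω * w i ω) ∂P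
      ≤ (n:ℝ) * (4 * Pb) := by
    have hstep : ∀ i : Fin n, ∫ ω, χ (fun i' => X i' ω) * (w i ω * w i ω) ∂P ≤ 4 * Pb := by
      intro i
      rw [(hχprod i).2, hχval]
      nlinarith [hEww_le i, hEww_nonneg i, hPb_nonneg]
    calc ∑ i, ∫ ω, χ (fun i' => X i' ω) * (w i ω * w i ω) ∂P
        ≤ ∑ i : Fin n, 4 * Pb := Finset.sum_le_sum fun i _ => hstep i
      _ = (n:ℝ) * (4 * Pb) := by
          rw [Finset.sum_const, Finset.card_univ, Fintype.card_fin, nsmul_eq_mul]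
  -- combine
  have hFval : ∫ ω, F ω ∂P ≤ 8/(n:ℝ) + (6*θ^2 + 16) * Pb := by
    rw [hFdef]
    have hAint : Integrable (fun ω => (1/(n:ℝ)) * ∑ i, ∑ j,
        psiK r n i j (fun i' => X i' ω) * (w i ω * w j ω)) P := hT1int.const_mul _
    have hBint : Integrable (fun ω => (6*θ^2) * χ (fun i' => X i' ω)) P := hχint.const_mul _
    have hCint : Integrable (fun ω => (4/(n:ℝ)) * ∑ i,
        χ (fun i' => X i' ω) * (w i ω * w i ω)) P := hT3int.const_mul _
    have hABint : Integrable (fun ω => (1/(n:ℝ)) * (∑ i, ∑ j,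
        psiK r n i j (fun i' => X i' ω) * (w i ω * w j ω))
        + (6*θ^2) * χ (fun i' => X i' ω)) P := hAint.add hBint
    rw [integral_add hABint hCint]
    rw [integral_add hAint hBint]
    rw [integral_const_mul, integral_const_mul, integral_const_mul]
    rw [hχval]
    have h1 : (1/(n:ℝ)) * (∫ ω, ∑ i, ∑ j,
        psiK r n i j (fun i' => X i' ω) * (w i ω * w j ω) ∂P) ≤ 8/(n:ℝ) := by
      rw [div_eq_mul_inv 8, mul_comm (8:ℝ)]
      rw [show (1/(n:ℝ)) = (n:ℝ)⁻¹ by ring]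
      apply mul_le_mul_of_nonneg_left hT1val (by positivity)
    have h3 : (4/(n:ℝ)) * (∫ ω, ∑ i, χ (fun i' => X i' ω) * (w i ω * w i ω) ∂P)
        ≤ 16 * Pb := by
      rw [integral_finset_sum _ (fun i _ => (hχprod i).1)]
      calc (4/(n:ℝ)) * (∑ i, ∫ ω, χ (fun i' => X i' ω) * (w i ω * w i ω) ∂P)
          ≤ (4/(n:ℝ)) * ((n:ℝ) * (4 * Pb)) :=
            mul_le_mul_of_nonneg_left hT3val (by positivity)
        _ = 16 * Pb := by field_simp; ring
    nlinarith [h1, h3]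
  -- final chain
  have hE0 : (0:ℝ) ≤ Real.exp (-(n:ℝ)*r/8) := (Real.exp_pos _).le
  have hfinal : 8/(n:ℝ) + (6*θ^2 + 16) * Pb
      ≤ 96 * ((θ^2 + 1) * (1/r) * Real.exp (-(n:ℝ)*r/8) + 1/(n:ℝ)) := by
    have hc1 : (6*θ^2 + 16) * Pb ≤ 16*(θ^2+1) * Pb := by
      apply mul_le_mul_of_nonneg_right _ hPb_nonneg
      nlinarith [sq_nonneg θ]
    have hc2 : 16*(θ^2+1) * Pb ≤ 16*(θ^2+1) * ((6/r) * Real.exp (-(n:ℝ)*r/8)) := by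
      apply mul_le_mul_of_nonneg_left hPb
      nlinarith [sq_nonneg θ]
    have hc3 : 16*(θ^2+1) * ((6/r) * Real.exp (-(n:ℝ)*r/8))
        = 96 * ((θ^2 + 1) * (1/r) * Real.exp (-(n:ℝ)*r/8)) := by
      field_simp
      ring
    have hc4 : 8/(n:ℝ) ≤ 96 * (1/(n:ℝ)) := by
      rw [div_eq_mul_inv]
      rw [show (96:ℝ) * (1/(n:ℝ)) = 96 * (n:ℝ)⁻¹ by ring]
      apply mul_le_mul_of_nonneg_right (by norm_num) (by positivity)
    nlinarith [hc1, hc2, hc3, hc4]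
  calc ∫ ω, f ω ∂P ≤ ∫ ω, F ω ∂P := hIle
    _ ≤ 8/(n:ℝ) + (6*θ^2 + 16) * Pb := hFval
    _ ≤ 96 * ((θ^2 + 1) * (1/r) * Real.exp (-(n:ℝ)*r/8) + 1/(n:ℝ)) := hfinal
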